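/- arXiv:2109.02017 — 10 statements merged into one kernel-verified Lean document; each statement's English description precedes it below -/
import Mathlib

section
/- Let G, R > 0, let ρ : [0,R] → ℝ be continuous and nonnegative, set M(r) = ∫₀^r 4π s² ρ(s) ds and Mtot = M(R), and assume Mtot > 0. Suppose p : [0,R] → ℝ is continuous, differentiable on (0,R), satisfies p'(r) = −G·M(r)·ρ(r)/r² for all r ∈ (0,R), and p(R) = 0. Then the central pressure satisfies p(0) ≥ G·Mtot²/(8π·R⁴). -/
open Set intervalIntegral

/-- Lower bound on the central pressure of a Newtonian star in hydrostatic
equilibrium: `p 0 ≥ G·Mtot²/(8πR⁴)`. -/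
theorem stmt1 (G R : ℝ) (hG : 0 < G) (hR : 0 < R)
    (ρ : ℝ → ℝ) (hρ_cont : ContinuousOn ρ (Icc 0 R))
    (hρ_nonneg : ∀ r ∈ Icc (0 : ℝ) R, 0 ≤ ρ r)
    (M : ℝ → ℝ)
    (hM : ∀ r, M r = ∫ s in (0 : ℝ)..r, 4 * Real.pi * s ^ 2 * ρ s)
    (hMtot : 0 < M R)
    (p : ℝ → ℝ) (hp_cont : ContinuousOn p (Icc 0 R))
    (hp_deriv : ∀ r ∈ Ioo (0 : ℝ) R, HasDerivAt p (-(G * M r * ρ r) / r ^ 2) r)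
    (hpR : p R = 0) :
    p 0 ≥ G * (M R) ^ 2 / (8 * Real.pi * R ^ 4) := by
  have hπ : (0 : ℝ) < Real.pi := Real.pi_pos
  set f : ℝ → ℝ := fun s => 4 * Real.pi * s ^ 2 * ρ s with hf
  have hf_cont : ContinuousOn f (Icc 0 R) := by
    apply ContinuousOn.mul _ hρ_cont
    fun_prop
  have huIcc : uIcc (0 : ℝ) R = Icc 0 R := uIcc_of_le hR.le
  have hf_int : IntervalIntegrable f MeasureTheory.volume 0 R :=
    (huIcc ▸ hf_cont).intervalIntegrable
  have hMfun : M = fun u => ∫ x in (0:ℝ)..u, f x := funext hM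
  -- continuity of M
  have hM_cont : ContinuousOn M (Icc 0 R) := by
    rw [hMfun]
    have := intervalIntegral.continuousOn_primitive_interval
      (μ := MeasureTheory.volume) (f := f) (a := (0:ℝ)) (b := R)
      (by rw [huIcc]; exact hf_cont.integrableOn_compact isCompact_Icc)
    rwa [huIcc] at this
  -- derivative of M
  have hM_deriv : ∀ r ∈ Ioo (0 : ℝ) R, HasDerivAt M (f r) r := by
    intro r hr
    have hmem : Icc (0:ℝ) R ∈ nhds r := Icc_mem_nhds hr.1 hr.2
    have hcontAt : ContinuousAt f r := ContinuousOn.continuousAt hf_cont hmem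
    have hint : IntervalIntegrable f MeasureTheory.volume 0 r := by
      apply hf_int.mono_set
      rw [huIcc, uIcc_of_le (le_of_lt hr.1)]
      exact Icc_subset_Icc le_rfl hr.2.le
    have hmeas : StronglyMeasurableAtFilter f (nhds r)
        MeasureTheory.volume :=
      ⟨Icc 0 R, hmem, hf_cont.aestronglyMeasurable measurableSet_Icc⟩
    rw [hMfun]
    exact intervalIntegral.integral_hasDerivAt_right hint hmeas hcontAt
  -- M is nonnegative on [0, R]
  have hM_nonneg : ∀ r ∈ Icc (0:ℝ) R, 0 ≤ M r := by
    intro r hr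
    rw [hM r]
    apply intervalIntegral.integral_nonneg hr.1
    intro s hs
    have hsR : s ∈ Icc (0:ℝ) R := ⟨hs.1, hs.2.trans hr.2⟩
    have := hρ_nonneg s hsR
    positivity
  have hM0 : M 0 = 0 := by rw [hM 0, intervalIntegral.integral_same]
  -- auxiliary function q
  set c : ℝ := G / (8 * Real.pi * R ^ 4) with hc
  have hcpos : 0 < c := by positivity
  set q : ℝ → ℝ := fun r => p r + c * (M r) ^ 2 with hq
  have hq_cont : ContinuousOn q (Icc 0 R) := by
    apply hp_cont.add
    exact (continuousOn_const.mul (hM_cont.pow 2))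
  have hq_deriv : ∀ r ∈ Ioo (0:ℝ) R,
      HasDerivAt q (-(G * M r * ρ r) / r ^ 2 + c * (2 * M r * f r)) r := by
    intro r hr
    exact (hp_deriv r hr).add ((((hM_deriv r hr).pow 2).const_mul c).congr_deriv (by ring))
  have hq_deriv_nonpos : ∀ r ∈ Ioo (0:ℝ) R,
      -(G * M r * ρ r) / r ^ 2 + c * (2 * M r * f r) ≤ 0 := by
    intro r hr
    have hr0 : 0 < r := hr.1
    have hrR : r < R := hr.2
    have hrIcc : r ∈ Icc (0:ℝ) R := ⟨hr0.le, hrR.le⟩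
    have hMr : 0 ≤ M r := hM_nonneg r hrIcc
    have hρr : 0 ≤ ρ r := hρ_nonneg r hrIcc
    have key : c * (2 * M r * f r) ≤ G * M r * ρ r / r ^ 2 := by
      have h1 : c * (2 * M r * f r) = (G * M r * ρ r) * (r ^ 2 / R ^ 4) := by
        simp only [hf, hc]
        field_simp
        ring
      have h2 : r ^ 2 / R ^ 4 ≤ 1 / r ^ 2 := by
        rw [div_le_div_iff₀ (by positivity) (by positivity)]
        calc r ^ 2 * r ^ 2 ≤ R ^ 2 * R ^ 2 := by
              apply mul_le_mul <;> nlinarith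
          _ = 1 * R ^ 4 := by ring
      calc c * (2 * M r * f r) = (G * M r * ρ r) * (r ^ 2 / R ^ 4) := h1
        _ ≤ (G * M r * ρ r) * (1 / r ^ 2) := by
            apply mul_le_mul_of_nonneg_left h2 (by positivity)
        _ = G * M r * ρ r / r ^ 2 := by ring
    linarith [key, neg_div (r^2) (G * M r * ρ r)]
  -- q is antitone on [0, R]
  have hq_anti : AntitoneOn q (Icc 0 R) := by
    apply antitoneOn_of_deriv_nonpos (convex_Icc 0 R) hq_cont
    · intro x hx
      rw [interior_Icc] at hx
      exact ((hq_deriv x hx).differentiableAt).differentiableWithinAt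
    · intro x hx
      rw [interior_Icc] at hx
      rw [(hq_deriv x hx).deriv]
      exact hq_deriv_nonpos x hx
  have hle : q R ≤ q 0 :=
    hq_anti (left_mem_Icc.2 hR.le) (right_mem_Icc.2 hR.le) hR.le
  have hq0 : q 0 = p 0 := by simp [hq, hM0]
  have hqR : q R = c * (M R) ^ 2 := by simp [hq, hpR]
  rw [hq0, hqR] at hle
  calc G * (M R) ^ 2 / (8 * Real.pi * R ^ 4) = c * (M R) ^ 2 := by rw [hc]; ring
    _ ≤ p 0 := hle
end

section
/- Fix an integer n ≥ 3 and let Aₙ = 2π^{n/2}/Γ(n/2) denote the surface area of the unit sphere in ℝⁿ. Let G, R > 0, let ρ : [0,R] → ℝ be continuous and nonnegative, set M(r) = ∫₀^r Aₙ·s^{n−1}·ρ(s) ds and Mtot = M(R), and assume Mtot > 0. Suppose p : [0,R] → ℝ is continuous, differentiable on (0,R), satisfies p'(r) = −G·M(r)·ρ(r)/r^{n−1} for all r ∈ (0,R), and p(R) = 0. Then the central pressure satisfies p(0) ≥ G·Mtot²/(2·Aₙ·R^{2(n−1)}) = G·Mtot²·Γ(n/2)/(4·π^{n/2}·R^{2(n−1)}).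 -/
open Set intervalIntegral

/-!
With `k = n - 1`, `c = G / (2 A R^{2k})` and `M r = ∫₀^r A s^k ρ(s) ds`, the function `p + c M²` is
nonincreasing on `[0, R]`: its derivative is `G M ρ (r^k / R^{2k} - 1 / r^k) ≤ 0` since
`r^{2k} ≤ R^{2k}`. Comparing its values at `0` (where `M = 0`) and at `R` (where `p = 0`)
gives `p 0 ≥ c M(R)²`.
-/

section Primitive

variable {f : ℝ → ℝ} {R : ℝ}

theorem continuousOn_primitive_Icc (hR : 0 ≤ R) (hf : ContinuousOn f (Icc 0 R)) :
    ContinuousOn (fun r => ∫ s in (0 : ℝ)..r, f s) (Icc 0 R) := by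
  rw [← uIcc_of_le hR] at hf ⊢
  exact continuousOn_primitive_interval (hf.integrableOn_compact isCompact_uIcc)

theorem hasDerivAt_primitive_of_mem_Ioo (hf : ContinuousOn f (Icc 0 R)) {r : ℝ}
    (hr : r ∈ Ioo 0 R) : HasDerivAt (fun r => ∫ s in (0 : ℝ)..r, f s) (f r) r := by
  have hf' : ContinuousOn f (Ioo 0 R) := hf.mono Ioo_subset_Icc_self
  refine integral_hasDerivAt_right ?_ (hf'.stronglyMeasurableAtFilter isOpen_Ioo r hr)
    (hf'.continuousAt (isOpen_Ioo.mem_nhds hr))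
  exact (hf.mono (Icc_subset_Icc_right hr.2.le)).intervalIntegrable_of_Icc hr.1.le

end Primitive

theorem hydrostatic_energy_deriv_nonpos {k : ℕ} {A G R r m ρ : ℝ} (hA : 0 < A) (hG : 0 ≤ G)
    (hr : 0 < r) (hrR : r ≤ R) (hm : 0 ≤ m) (hρ : 0 ≤ ρ) :
    -(G * m * ρ) / r ^ k + G / (2 * A * R ^ (2 * k)) * (2 * m * (A * r ^ k * ρ)) ≤ 0 := by
  have hrk : 0 < r ^ k := by positivity
  have hRk : 0 < R ^ (2 * k) := by have := hr.trans_le hrR; positivity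
  have hrR2k : r ^ k * r ^ k ≤ R ^ (2 * k) := by
    rw [← pow_add, ← two_mul]
    exact pow_le_pow_left₀ hr.le hrR _
  have hexpand : -(G * m * ρ) / r ^ k + G / (2 * A * R ^ (2 * k)) * (2 * m * (A * r ^ k * ρ))
      = G * m * ρ * (r ^ k / R ^ (2 * k) - 1 / r ^ k) := by
    field_simp
    ring
  rw [hexpand]
  refine mul_nonpos_of_nonneg_of_nonpos (by positivity) ?_
  rw [sub_nonpos, div_le_div_iff₀ hRk hrk, one_mul]
  exact hrR2k

theorem central_pressure_ge_of_hydrostatic {k : ℕ} {A G R : ℝ} (hA : 0 < A) (hG : 0 ≤ G)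
    (hR : 0 < R) {ρ M p : ℝ → ℝ} (hρ_cont : ContinuousOn ρ (Icc 0 R))
    (hρ_nonneg : ∀ r ∈ Icc (0 : ℝ) R, 0 ≤ ρ r)
    (hM : ∀ r, M r = ∫ s in (0 : ℝ)..r, A * s ^ k * ρ s)
    (hp_cont : ContinuousOn p (Icc 0 R))
    (hp_deriv : ∀ r ∈ Ioo (0 : ℝ) R, HasDerivAt p (-(G * M r * ρ r) / r ^ k) r)
    (hpR : p R = 0) :
    G * M R ^ 2 / (2 * A * R ^ (2 * k)) ≤ p 0 := by
  set c := G / (2 * A * R ^ (2 * k))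
  have hdens_cont : ContinuousOn (fun s => A * s ^ k * ρ s) (Icc 0 R) := by fun_prop
  have hM_cont : ContinuousOn M (Icc 0 R) := by
    rw [funext hM]
    exact continuousOn_primitive_Icc hR.le hdens_cont
  have hM_deriv (r : ℝ) (hr : r ∈ Ioo 0 R) : HasDerivAt M (A * r ^ k * ρ r) r := by
    rw [funext hM]
    exact hasDerivAt_primitive_of_mem_Ioo hdens_cont hr
  have hM_nonneg (r : ℝ) (hr : r ∈ Icc 0 R) : 0 ≤ M r := by
    rw [hM]
    refine integral_nonneg hr.1 fun s hs => mul_nonneg ?_ (hρ_nonneg s ⟨hs.1, hs.2.trans hr.2⟩)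
    have := hs.1
    positivity
  have hanti : AntitoneOn (fun r => p r + c * M r ^ 2) (Icc 0 R) := by
    refine antitoneOn_of_hasDerivWithinAt_nonpos (convex_Icc 0 R)
      (hp_cont.add (continuousOn_const.mul (hM_cont.pow 2)))
      (f' := fun r => -(G * M r * ρ r) / r ^ k + c * (2 * M r * (A * r ^ k * ρ r))) ?_ ?_
    all_goals rw [interior_Icc]; intro r hr
    · have hMsq := ((hM_deriv r hr).pow 2).const_mul c
      refine ((hp_deriv r hr).add hMsq).hasDerivWithinAt.congr_deriv ?_
      ring
    · exact hydrostatic_energy_deriv_nonpos hA hG hr.1 hr.2.le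
        (hM_nonneg r (Ioo_subset_Icc_self hr)) (hρ_nonneg r (Ioo_subset_Icc_self hr))
  have h := hanti (left_mem_Icc.2 hR.le) (right_mem_Icc.2 hR.le) hR.le
  simpa [hpR, hM 0, mul_div_right_comm] using h

theorem stmt2_general (n : ℕ) (hn : 3 ≤ n) (G R : ℝ) (hG : 0 < G) (hR : 0 < R)
    (A : ℝ) (hA : A = 2 * Real.pi ^ ((n : ℝ) / 2) / Real.Gamma ((n : ℝ) / 2))
    (ρ : ℝ → ℝ) (hρ_cont : ContinuousOn ρ (Icc 0 R))
    (hρ_nonneg : ∀ r ∈ Icc (0 : ℝ) R, 0 ≤ ρ r)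
    (M : ℝ → ℝ)
    (hM : ∀ r, M r = ∫ s in (0 : ℝ)..r, A * s ^ (n - 1) * ρ s)
    (p : ℝ → ℝ) (hp_cont : ContinuousOn p (Icc 0 R))
    (hp_deriv : ∀ r ∈ Ioo (0 : ℝ) R, HasDerivAt p (-(G * M r * ρ r) / r ^ (n - 1)) r)
    (hpR : p R = 0) :
    p 0 ≥ G * (M R) ^ 2 / (2 * A * R ^ (2 * (n - 1))) ∧
      G * (M R) ^ 2 / (2 * A * R ^ (2 * (n - 1)))
        = G * (M R) ^ 2 * Real.Gamma ((n : ℝ) / 2)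
            / (4 * Real.pi ^ ((n : ℝ) / 2) * R ^ (2 * (n - 1))) := by
  have hA_pos : 0 < A := by
    rw [hA]
    have : (0 : ℝ) < n / 2 := by positivity
    have := Real.Gamma_pos_of_pos this
    positivity
  refine ⟨central_pressure_ge_of_hydrostatic hA_pos hG.le hR hρ_cont hρ_nonneg hM hp_cont
    hp_deriv hpR, ?_⟩
  rw [hA]
  field_simp
  ring

/-- Central pressure lower bound for an `n`-dimensional star (`n ≥ 3`) in hydrostatic
equilibrium: `p 0 ≥ G·Mtot²/(2·Aₙ·R^{2(n−1)}) = G·Mtot²·Γ(n/2)/(4·π^{n/2}·R^{2(n−1)})`,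
where `Aₙ = 2π^{n/2}/Γ(n/2)`. -/
theorem stmt2 (n : ℕ) (hn : 3 ≤ n) (G R : ℝ) (hG : 0 < G) (hR : 0 < R)
    (A : ℝ) (hA : A = 2 * Real.pi ^ ((n : ℝ) / 2) / Real.Gamma ((n : ℝ) / 2))
    (ρ : ℝ → ℝ) (hρ_cont : ContinuousOn ρ (Icc 0 R))
    (hρ_nonneg : ∀ r ∈ Icc (0 : ℝ) R, 0 ≤ ρ r)
    (M : ℝ → ℝ)
    (hM : ∀ r, M r = ∫ s in (0 : ℝ)..r, A * s ^ (n - 1) * ρ s)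
    (hMtot : 0 < M R)
    (p : ℝ → ℝ) (hp_cont : ContinuousOn p (Icc 0 R))
    (hp_deriv : ∀ r ∈ Ioo (0 : ℝ) R, HasDerivAt p (-(G * M r * ρ r) / r ^ (n - 1)) r)
    (hpR : p R = 0) :
    p 0 ≥ G * (M R) ^ 2 / (2 * A * R ^ (2 * (n - 1))) ∧
      G * (M R) ^ 2 / (2 * A * R ^ (2 * (n - 1)))
        = G * (M R) ^ 2 * Real.Gamma ((n : ℝ) / 2)
            / (4 * Real.pi ^ ((n : ℝ) / 2) * R ^ (2 * (n - 1))) :=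
  stmt2_general n hn G R hG hR A hA ρ hρ_cont hρ_nonneg M hM p hp_cont hp_deriv hpR
end

section
/- Let G, R > 0, let ρ : [0,R] → ℝ be continuous and nonnegative with ρ positive near 0, set M(r) = ∫₀^r 4π s² ρ(s) ds, and suppose p : [0,R] → ℝ is continuous, differentiable on (0,R), and satisfies p'(r) = −G·M(r)·ρ(r)/r² on (0,R). If the mean-density function r ↦ M(r)/r³ is nonincreasing on (0,R], then the function F(r) = p(r) + (3G/(8π))·M(r)²/r⁴ is nonincreasing on (0,R]. Consequently, if in addition p(R) = 0 and M(R) = Mtot, then the central pressure satisfies p(0) ≥ (3G/(8π))·Mtot²/R⁴. -/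
open Set intervalIntegral Filter Topology

/-- If `f` is antitone on `Ioc 0 R` and has derivative `d` at an interior point,
then `d ≤ 0`. -/
lemma aux_antitone_deriv_nonpos {f : ℝ → ℝ} {R x d : ℝ}
    (hf : AntitoneOn f (Ioc 0 R)) (hx : x ∈ Ioo 0 R) (hd : HasDerivAt f d x) : d ≤ 0 := by
  have h := hasDerivAt_iff_tendsto_slope.mp hd
  have hmono : 𝓝[>] x ≤ 𝓝[≠] x :=
    nhdsWithin_mono x (fun y hy => ne_of_gt hy)
  have h' : Tendsto (slope f x) (𝓝[>] x) (𝓝 d) := h.mono_left hmono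
  refine le_of_tendsto h' ?_
  filter_upwards [Ioc_mem_nhdsGT_of_mem (⟨le_rfl, hx.2⟩ : x ∈ Ico x R)] with y hy
  have hxm : x ∈ Ioc 0 R := ⟨hx.1, hx.2.le⟩
  have hym : y ∈ Ioc 0 R := ⟨lt_trans hx.1 hy.1, hy.2⟩
  have hfy : f y ≤ f x := hf hxm hym hy.1.le
  rw [slope_def_field]
  exact div_nonpos_of_nonpos_of_nonneg (sub_nonpos.mpr hfy) (sub_nonneg.mpr hy.1.le)

/-- Chandrasekhar-type theorem: if the mean density `M r / r³` is nonincreasing, then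
`F r = p r + (3G/(8π))·(M r)²/r⁴` is nonincreasing on `(0,R]`; consequently, if
`p R = 0` then `p 0 ≥ (3G/(8π))·Mtot²/R⁴`. -/
theorem stmt3 (G R : ℝ) (hG : 0 < G) (hR : 0 < R)
    (ρ : ℝ → ℝ) (hρ_cont : ContinuousOn ρ (Icc 0 R))
    (hρ_nonneg : ∀ r ∈ Icc (0 : ℝ) R, 0 ≤ ρ r)
    (hρ_pos : ∃ ε > 0, ∀ r ∈ Ico (0 : ℝ) ε, 0 < ρ r)
    (M : ℝ → ℝ)
    (hM : ∀ r, M r = ∫ s in (0 : ℝ)..r, 4 * Real.pi * s ^ 2 * ρ s)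
    (p : ℝ → ℝ) (hp_cont : ContinuousOn p (Icc 0 R))
    (hp_deriv : ∀ r ∈ Ioo (0 : ℝ) R, HasDerivAt p (-(G * M r * ρ r) / r ^ 2) r)
    (hmean : AntitoneOn (fun r => M r / r ^ 3) (Ioc 0 R)) :
    AntitoneOn (fun r => p r + (3 * G / (8 * Real.pi)) * (M r) ^ 2 / r ^ 4) (Ioc 0 R) ∧
      (p R = 0 → p 0 ≥ (3 * G / (8 * Real.pi)) * (M R) ^ 2 / R ^ 4) := by
  have hπ : (0 : ℝ) < Real.pi := Real.pi_pos
  set c : ℝ := 3 * G / (8 * Real.pi) with hc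
  have hc_pos : 0 < c := by positivity
  set f : ℝ → ℝ := fun s => 4 * Real.pi * s ^ 2 * ρ s with hf
  have hf_cont : ContinuousOn f (Icc 0 R) := by
    apply ContinuousOn.mul (by fun_prop) hρ_cont
  have hint : ∀ r ∈ Icc (0 : ℝ) R, IntervalIntegrable f MeasureTheory.volume 0 r := by
    intro r hr
    apply ContinuousOn.intervalIntegrable
    rw [uIcc_of_le hr.1]
    exact hf_cont.mono (Icc_subset_Icc le_rfl hr.2)
  -- M equals the primitive
  have hMfun : M = fun r => ∫ s in (0 : ℝ)..r, f s := funext hM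
  -- continuity of M on [0,R]
  have hM_cont : ContinuousOn M (Icc 0 R) := by
    rw [hMfun]
    have := intervalIntegral.continuousOn_primitive_interval
      (f := f) (a := (0 : ℝ)) (b := R) (μ := MeasureTheory.volume) ?_
    · rwa [uIcc_of_le hR.le] at this
    · rw [uIcc_of_le hR.le]
      exact (hf_cont.mono (by simp)).integrableOn_compact isCompact_Icc
  -- derivative of M
  have hM_deriv : ∀ r ∈ Ioo (0 : ℝ) R, HasDerivAt M (4 * Real.pi * r ^ 2 * ρ r) r := by
    intro r hr
    have hmeas : StronglyMeasurableAtFilter f (𝓝 r) MeasureTheory.volume :=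
      (ContinuousOn.stronglyMeasurableAtFilter isOpen_Ioo
        (hf_cont.mono Ioo_subset_Icc_self) ) r hr
    have hcont : ContinuousAt f r :=
      (hf_cont.continuousAt (Icc_mem_nhds hr.1 hr.2))
    have := intervalIntegral.integral_hasDerivAt_right
      (hint r ⟨hr.1.le, hr.2.le⟩) hmeas hcont
    rw [hMfun]
    exact this
  -- nonnegativity of M
  have hM_nonneg : ∀ r ∈ Icc (0 : ℝ) R, 0 ≤ M r := by
    intro r hr
    rw [hM r]
    apply intervalIntegral.integral_nonneg hr.1
    intro s hs
    have : ρ s ≥ 0 := hρ_nonneg s ⟨hs.1, hs.2.trans hr.2⟩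
    positivity
  -- key inequality from antitone mean density
  have hkey : ∀ r ∈ Ioo (0 : ℝ) R, 4 * Real.pi * ρ r * r ^ 3 ≤ 3 * M r := by
    intro r hr
    have hr0 : 0 < r := hr.1
    have hrne : r ^ 3 ≠ 0 := by positivity
    have hq : HasDerivAt (fun r => M r / r ^ 3)
        ((4 * Real.pi * r ^ 2 * ρ r * r ^ 3 - M r * ((3 : ℕ) * r ^ 2)) / (r ^ 3) ^ 2) r := by
      have h3 : HasDerivAt (fun r : ℝ => r ^ 3) ((3 : ℕ) * r ^ 2) r := by
        simpa using hasDerivAt_pow 3 r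
      exact (hM_deriv r hr).div h3 hrne
    have hq0 := aux_antitone_deriv_nonpos hmean hr hq
    have hden : (0 : ℝ) < (r ^ 3) ^ 2 := by positivity
    have hnum : 4 * Real.pi * r ^ 2 * ρ r * r ^ 3 - M r * ((3 : ℕ) * r ^ 2) ≤ 0 := by
      by_contra hpos
      push_neg at hpos
      exact absurd hq0 (not_le.mpr (div_pos hpos hden))
    push_cast at hnum
    have h2 : (4 * Real.pi * ρ r * r ^ 3) * r ^ 2 ≤ (3 * M r) * r ^ 2 := by nlinarith
    exact le_of_mul_le_mul_right h2 (by positivity)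
  -- derivative of F and its sign
  set F : ℝ → ℝ := fun r => p r + c * M r ^ 2 / r ^ 4 with hF
  have hF_deriv : ∀ r ∈ Ioo (0 : ℝ) R, ∃ D, HasDerivAt F D r ∧ D ≤ 0 := by
    intro r hr
    have hr0 : 0 < r := hr.1
    have hr4 : (r : ℝ) ^ 4 ≠ 0 := by positivity
    have h4 : HasDerivAt (fun r : ℝ => r ^ 4) ((4 : ℕ) * r ^ 3) r := by
      simpa using hasDerivAt_pow 4 r
    have hM2 : HasDerivAt (fun r => c * M r ^ 2)
        (c * ((2 : ℕ) * M r ^ 1 * (4 * Real.pi * r ^ 2 * ρ r))) r :=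
      ((hM_deriv r hr).pow 2).const_mul c
    have hdiv : HasDerivAt (fun r => c * M r ^ 2 / r ^ 4)
        ((c * ((2 : ℕ) * M r ^ 1 * (4 * Real.pi * r ^ 2 * ρ r)) * r ^ 4
          - c * M r ^ 2 * ((4 : ℕ) * r ^ 3)) / (r ^ 4) ^ 2) r := hM2.div h4 hr4
    refine ⟨_, (hp_deriv r hr).add hdiv, ?_⟩
    have hMr : 0 ≤ M r := hM_nonneg r ⟨hr0.le, hr.2.le⟩
    have hk := hkey r hr
    have heq : -(G * M r * ρ r) / r ^ 2 +
        (c * ((2 : ℕ) * M r ^ 1 * (4 * Real.pi * r ^ 2 * ρ r)) * r ^ 4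
          - c * M r ^ 2 * ((4 : ℕ) * r ^ 3)) / (r ^ 4) ^ 2
        = G * M r * (4 * Real.pi * ρ r * r ^ 3 - 3 * M r) / (2 * Real.pi * r ^ 5) := by
      rw [hc]
      push_cast
      field_simp
      ring
    rw [heq]
    apply div_nonpos_of_nonpos_of_nonneg
    · apply mul_nonpos_of_nonneg_of_nonpos
      · positivity
      · linarith
    · positivity
  -- F is antitone
  have hF_anti : AntitoneOn F (Ioc 0 R) := by
    apply antitoneOn_of_deriv_nonpos (convex_Ioc 0 R)
    · apply ContinuousOn.add
      · exact hp_cont.mono Ioc_subset_Icc_self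
      · apply ContinuousOn.div
        · exact continuousOn_const.mul ((hM_cont.mono Ioc_subset_Icc_self).pow 2)
        · fun_prop
        · intro x hx
          have : 0 < x := hx.1
          positivity
    · rw [interior_Ioc]
      intro x hx
      obtain ⟨D, hD, _⟩ := hF_deriv x hx
      exact hD.differentiableAt.differentiableWithinAt
    · rw [interior_Ioc]
      intro x hx
      obtain ⟨D, hD, hD0⟩ := hF_deriv x hx
      rw [hD.deriv]
      exact hD0
  refine ⟨hF_anti, ?_⟩
  intro hpR
  -- bound on M near 0
  obtain ⟨C₀, hC₀⟩ := isCompact_Icc.exists_bound_of_continuousOn hρ_cont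
  have hC₀0 : 0 ≤ C₀ := le_trans (norm_nonneg _) (hC₀ 0 ⟨le_rfl, hR.le⟩)
  set K : ℝ := 4 * Real.pi * C₀ / 3 with hK
  have hK0 : 0 ≤ K := by positivity
  have hMle : ∀ r ∈ Ioc (0 : ℝ) R, M r ≤ K * r ^ 3 := by
    intro r hr
    rw [hM r]
    have h1 : IntervalIntegrable (fun s => 4 * Real.pi * C₀ * s ^ 2)
        MeasureTheory.volume 0 r := by
      apply ContinuousOn.intervalIntegrable; fun_prop
    have h2 : (∫ s in (0 : ℝ)..r, f s) ≤ ∫ s in (0 : ℝ)..r, 4 * Real.pi * C₀ * s ^ 2 := by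
      apply intervalIntegral.integral_mono_on hr.1.le (hint r ⟨hr.1.le, hr.2⟩) h1
      intro s hs
      have hsm : s ∈ Icc (0 : ℝ) R := ⟨hs.1, hs.2.trans hr.2⟩
      have hρs : ρ s ≤ C₀ := le_trans (le_abs_self _) (hC₀ s hsm)
      have : 4 * Real.pi * s ^ 2 * ρ s ≤ 4 * Real.pi * s ^ 2 * C₀ := by
        apply mul_le_mul_of_nonneg_left hρs (by positivity)
      calc f s ≤ 4 * Real.pi * s ^ 2 * C₀ := this
        _ = 4 * Real.pi * C₀ * s ^ 2 := by ring
    refine h2.trans (le_of_eq ?_)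
    rw [integral_const_mul, integral_pow]
    rw [hK]; norm_num; ring
  -- limit of F at 0 from the right within Ioc
  have hne : (𝓝[Ioc (0 : ℝ) R] 0).NeBot := by
    apply mem_closure_iff_nhdsWithin_neBot.mp
    rw [closure_Ioc hR.ne]
    exact ⟨le_rfl, hR.le⟩
  have hp_lim : Tendsto p (𝓝[Ioc (0 : ℝ) R] 0) (𝓝 (p 0)) :=
    (hp_cont 0 ⟨le_rfl, hR.le⟩).mono Ioc_subset_Icc_self
  have hg_lim : Tendsto (fun r => c * M r ^ 2 / r ^ 4) (𝓝[Ioc (0 : ℝ) R] 0) (𝓝 0) := by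
    apply squeeze_zero' (g := fun r => c * K ^ 2 * r ^ 2)
    · filter_upwards [self_mem_nhdsWithin] with r hr
      have : 0 ≤ M r := hM_nonneg r ⟨hr.1.le, hr.2⟩
      have : 0 < r := hr.1
      positivity
    · filter_upwards [self_mem_nhdsWithin] with r hr
      have hr0 : 0 < r := hr.1
      have hMr : 0 ≤ M r := hM_nonneg r ⟨hr0.le, hr.2⟩
      have hle := hMle r hr
      have hsq : M r ^ 2 ≤ K ^ 2 * r ^ 6 := by nlinarith
      rw [div_le_iff₀ (by positivity : (0:ℝ) < r ^ 4)]
      nlinarith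
    · have hcont : Continuous fun r : ℝ => c * K ^ 2 * r ^ 2 := by fun_prop
      have h := (hcont.tendsto 0).mono_left
        (nhdsWithin_le_nhds (s := Ioc (0 : ℝ) R))
      have h0 : c * K ^ 2 * (0 : ℝ) ^ 2 = 0 := by norm_num
      rw [h0] at h
      exact h
  have hF_lim : Tendsto F (𝓝[Ioc (0 : ℝ) R] 0) (𝓝 (p 0 + 0)) := hp_lim.add hg_lim
  have hge : p 0 + 0 ≥ c * M R ^ 2 / R ^ 4 := by
    refine ge_of_tendsto hF_lim ?_
    filter_upwards [self_mem_nhdsWithin] with r hr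
    have h := hF_anti hr ⟨hR, le_rfl⟩ hr.2
    have : F R = c * M R ^ 2 / R ^ 4 := by
      simp [hF, hpR]
    linarith [h, this ▸ h]
  simpa using hge
end

section
/- Let ξ < 4 be a real number. Let G, R > 0, let ρ : [0,R] → ℝ be continuous and nonnegative, set M(r) = ∫₀^r 4π s² ρ(s) ds, and suppose p : [0,R] → ℝ is continuous, differentiable on (0,R), satisfies p'(r) = −G·M(r)·ρ(r)/r² on (0,R), and p(R) = 0. Then ∫₀^R G·M(r)·M'(r)/r^{ξ} dr = 4π·(4−ξ)·∫₀^R p(r)·r^{3−ξ} dr, where M'(r) = 4π r² ρ(r). -/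
/-!
Hydrostatic equilibrium makes `-4π r^(4-ξ) p(r)` an antiderivative of
`G M M' / r^ξ - 4π (4-ξ) p r^(3-ξ)` on `(0, R)`. It vanishes at `R` because `p R = 0` and at `0`
because `4 - ξ > 0`, so the fundamental theorem of calculus gives the identity once both terms
are integrable; for the gravitational term this holds because `M(r) = O(r³)` makes it
`O(r^(5-ξ))`.
-/

open Set intervalIntegral MeasureTheory

theorem abs_integral_le_of_abs_le_mul_pow {g : ℝ → ℝ} {C r : ℝ} (n : ℕ) (hr : 0 ≤ r)
    (hg : ∀ s ∈ Ioc 0 r, |g s| ≤ C * s ^ n) :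
    |∫ s in (0 : ℝ)..r, g s| ≤ C * r ^ (n + 1) / (n + 1) := by
  calc |∫ s in (0 : ℝ)..r, g s|
      ≤ ∫ s in (0 : ℝ)..r, C * s ^ n := by
        simpa only [Real.norm_eq_abs] using
          norm_integral_le_of_norm_le (f := g) hr (ae_of_all _ hg)
          ((by fun_prop : Continuous fun s : ℝ => C * s ^ n).intervalIntegrable 0 r)
    _ = C * r ^ (n + 1) / (n + 1) := by
        rw [intervalIntegral.integral_const_mul, integral_pow]
        ring

theorem intervalIntegrable_of_abs_le_mul_rpow {f : ℝ → ℝ} {a C R : ℝ} (hR : 0 ≤ R)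
    (ha : -1 < a) (hf : ContinuousOn f (Ioc 0 R))
    (hle : ∀ r ∈ Ioc 0 R, |f r| ≤ C * r ^ a) :
    IntervalIntegrable f volume 0 R := by
  refine ((intervalIntegrable_rpow' ha).const_mul C).mono_fun' ?_ ?_ <;> rw [uIoc_of_le hR]
  · exact hf.aestronglyMeasurable measurableSet_Ioc
  · exact (ae_restrict_iff' measurableSet_Ioc).2 (ae_of_all _ hle)

section HydrostaticEquilibrium

variable {ξ G R : ℝ} {ρ M p : ℝ → ℝ}

theorem continuousOn_mass (hR : 0 ≤ R) (hρ : ContinuousOn ρ (Icc 0 R))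
    (hM : ∀ r, M r = ∫ s in (0 : ℝ)..r, 4 * Real.pi * s ^ 2 * ρ s) :
    ContinuousOn M (Icc 0 R) := by
  rw [funext hM, ← uIcc_of_le hR]
  refine continuousOn_primitive_interval ?_
  rw [uIcc_of_le hR]
  exact ((continuousOn_const.mul (continuousOn_pow 2)).mul hρ).integrableOn_Icc

theorem exists_abs_mass_le_mul_pow_three (hρ : ContinuousOn ρ (Icc 0 R))
    (hM : ∀ r, M r = ∫ s in (0 : ℝ)..r, 4 * Real.pi * s ^ 2 * ρ s) :
    ∃ K, ∀ r ∈ Icc 0 R, |M r| ≤ K * r ^ 3 := by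
  obtain ⟨B, hB⟩ := isCompact_Icc.exists_bound_of_continuousOn hρ
  refine ⟨4 * Real.pi * B / 3, fun r hr => ?_⟩
  rw [hM]
  convert abs_integral_le_of_abs_le_mul_pow (C := 4 * Real.pi * B) 2 hr.1 fun s hs => ?_ using 1
  · push_cast
    ring
  have hρs : |ρ s| ≤ B := hB s ⟨hs.1.le, hs.2.trans hr.2⟩
  rw [abs_mul, abs_of_nonneg (by positivity : 0 ≤ 4 * Real.pi * s ^ 2)]
  linarith [mul_le_mul_of_nonneg_left hρs (by positivity : 0 ≤ 4 * Real.pi * s ^ 2)]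

theorem intervalIntegrable_gravity_integrand (hξ : ξ < 4) (hR : 0 ≤ R)
    (hρ : ContinuousOn ρ (Icc 0 R))
    (hM : ∀ r, M r = ∫ s in (0 : ℝ)..r, 4 * Real.pi * s ^ 2 * ρ s) :
    IntervalIntegrable (fun r => G * M r * (4 * Real.pi * r ^ 2 * ρ r) / r ^ ξ) volume 0 R := by
  obtain ⟨K, hK⟩ := exists_abs_mass_le_mul_pow_three hρ hM
  obtain ⟨B, hB⟩ := isCompact_Icc.exists_bound_of_continuousOn hρ
  have hM_cont := continuousOn_mass hR hρ hM
  refine intervalIntegrable_of_abs_le_mul_rpow (C := |G| * K * (4 * Real.pi) * B) hR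
    (a := 5 - ξ) (by linarith) ?_ fun r hr => ?_
  · have hIoc : Ioc 0 R ⊆ Icc 0 R := Ioc_subset_Icc_self
    refine ContinuousOn.div ?_ ?_ fun r hr => (Real.rpow_pos_of_pos hr.1 ξ).ne'
    · exact (continuousOn_const.mul (hM_cont.mono hIoc)).mul
        ((continuousOn_const.mul (continuousOn_pow 2)).mul (hρ.mono hIoc))
    exact fun r hr => (Real.continuousAt_rpow_const r ξ (Or.inl hr.1.ne')).continuousWithinAt
  have hrξ : 0 < r ^ ξ := Real.rpow_pos_of_pos hr.1 ξ
  have hρr : |ρ r| ≤ B := hB r (Ioc_subset_Icc_self hr)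
  rw [Real.rpow_sub hr.1, abs_div, abs_of_pos hrξ, ← mul_div_assoc]
  gcongr
  norm_cast
  calc |G * M r * (4 * Real.pi * r ^ 2 * ρ r)|
      = |G| * |M r| * (4 * Real.pi * r ^ 2) * |ρ r| := by
        rw [abs_mul, abs_mul, abs_mul, abs_of_nonneg (by positivity : 0 ≤ 4 * Real.pi * r ^ 2)]
        ring
    _ ≤ |G| * (K * r ^ 3) * (4 * Real.pi * r ^ 2) * B := by
        have hMr := hK r (Ioc_subset_Icc_self hr)
        have hKr : 0 ≤ K * r ^ 3 := (abs_nonneg _).trans hMr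
        exact mul_le_mul (by gcongr) hρr (abs_nonneg _)
          (mul_nonneg (mul_nonneg (abs_nonneg _) hKr) (by positivity))
    _ = |G| * K * (4 * Real.pi) * B * r ^ 5 := by ring

theorem hasDerivAt_pressure_moment {r : ℝ} (hr : 0 < r)
    (hp : HasDerivAt p (-(G * M r * ρ r) / r ^ 2) r) :
    HasDerivAt (fun x => -(4 * Real.pi * x ^ (4 - ξ) * p x))
      (G * M r * (4 * Real.pi * r ^ 2 * ρ r) / r ^ ξ
        - 4 * Real.pi * (4 - ξ) * (p r * r ^ (3 - ξ))) r := by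
  have hpow : HasDerivAt (fun x : ℝ => x ^ (4 - ξ)) ((4 - ξ) * r ^ (4 - ξ - 1)) r :=
    Real.hasDerivAt_rpow_const (Or.inl hr.ne')
  refine ((hpow.const_mul (4 * Real.pi)).mul hp).neg.congr_deriv ?_
  have hrξ : r ^ ξ ≠ 0 := (Real.rpow_pos_of_pos hr ξ).ne'
  rw [show 4 - ξ - 1 = 3 - ξ by ring, Real.rpow_sub hr, Real.rpow_sub hr]
  norm_cast
  field_simp
  ring

end HydrostaticEquilibrium

theorem stmt4_general (ξ : ℝ) (hξ : ξ < 4) (G R : ℝ) (hR : 0 < R)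
    (ρ : ℝ → ℝ) (hρ_cont : ContinuousOn ρ (Icc 0 R))
    (M : ℝ → ℝ)
    (hM : ∀ r, M r = ∫ s in (0 : ℝ)..r, 4 * Real.pi * s ^ 2 * ρ s)
    (p : ℝ → ℝ) (hp_cont : ContinuousOn p (Icc 0 R))
    (hp_deriv : ∀ r ∈ Ioo (0 : ℝ) R, HasDerivAt p (-(G * M r * ρ r) / r ^ 2) r)
    (hpR : p R = 0) :
    (∫ r in (0 : ℝ)..R, G * M r * (4 * Real.pi * r ^ 2 * ρ r) / r ^ ξ)
      = 4 * Real.pi * (4 - ξ) * ∫ r in (0 : ℝ)..R, p r * r ^ (3 - ξ) := by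
  have hgrav := intervalIntegrable_gravity_integrand (G := G) hξ hR.le hρ_cont hM
  have hmoment : IntervalIntegrable (fun r => p r * r ^ (3 - ξ)) volume 0 R :=
    (intervalIntegrable_rpow' (by linarith)).continuousOn_mul (by rwa [uIcc_of_le hR.le])
  have hweight : Continuous fun r : ℝ => r ^ (4 - ξ) :=
    Real.continuous_rpow_const (by linarith)
  have hFTC := integral_eq_sub_of_hasDerivAt_of_le hR.le
    (by fun_prop : ContinuousOn (fun r => -(4 * Real.pi * r ^ (4 - ξ) * p r)) (Icc 0 R))
    (fun r hr => hasDerivAt_pressure_moment hr.1 (hp_deriv r hr))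
    (hgrav.sub (hmoment.const_mul _))
  rw [intervalIntegral.integral_sub hgrav (hmoment.const_mul _),
    intervalIntegral.integral_const_mul, hpR, Real.zero_rpow (by linarith)] at hFTC
  linarith

/-- Chandrasekhar integral identity: for `ξ < 4`,
`∫₀^R G·M·M'/r^ξ dr = 4π(4−ξ)·∫₀^R p·r^{3−ξ} dr` where `M' r = 4πr²ρ r`. -/
theorem stmt4 (ξ : ℝ) (hξ : ξ < 4) (G R : ℝ) (hG : 0 < G) (hR : 0 < R)
    (ρ : ℝ → ℝ) (hρ_cont : ContinuousOn ρ (Icc 0 R))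
    (hρ_nonneg : ∀ r ∈ Icc (0 : ℝ) R, 0 ≤ ρ r)
    (M : ℝ → ℝ)
    (hM : ∀ r, M r = ∫ s in (0 : ℝ)..r, 4 * Real.pi * s ^ 2 * ρ s)
    (p : ℝ → ℝ) (hp_cont : ContinuousOn p (Icc 0 R))
    (hp_deriv : ∀ r ∈ Ioo (0 : ℝ) R, HasDerivAt p (-(G * M r * ρ r) / r ^ 2) r)
    (hpR : p R = 0) :
    (∫ r in (0 : ℝ)..R, G * M r * (4 * Real.pi * r ^ 2 * ρ r) / r ^ ξ)
      = 4 * Real.pi * (4 - ξ) * ∫ r in (0 : ℝ)..R, p r * r ^ (3 - ξ) :=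
  stmt4_general ξ hξ G R hR ρ hρ_cont M hM p hp_cont hp_deriv hpR
end

section
/- (Free-fall/hydrodynamical time.) Let G, M, R, T > 0 and let λ : [0,T] → ℝ be continuous, twice differentiable on [0,T), with λ(0) = R, λ'(0) = 0, λ(t) > 0 and λ'(t) ≤ 0 for all t ∈ [0,T), λ(T) = 0, and λ''(t) = −G·M/λ(t)² for all t ∈ (0,T). Then T = (π/2)·R^{3/2}/√(2·G·M); equivalently, with ρ₀ = 3M/(4π R³), T = √(3π/(32·G·ρ₀)). -/
/-!
Along the collapse the energy `λ'² - 2GM/λ` is conserved, so `λ'² = 2GM (1/λ - 1/R)` and, as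
`λ' ≤ 0`, the velocity is a function of the radius alone: `λ' = -s(λ)`. The cycloid time
`τ(x) = R^{3/2}/√(2GM) · (arcsin √(x/R) - √((x/R)(1 - x/R)))` satisfies `τ' = 1/s`, hence
`t + τ(λ t)` is constant on `[0, T]`; comparing `t = 0` with `t = T` gives
`T = τ(R) = (π/2) R^{3/2}/√(2GM)`.
-/

open Set Real

theorem eq_of_hasDerivAt_eq_zero {f : ℝ → ℝ} {a b : ℝ} (hab : a ≤ b)
    (hf : ContinuousOn f (Icc a b)) (hf' : ∀ x ∈ Ioo a b, HasDerivAt f 0 x) : f b = f a := by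
  rcases hab.eq_or_lt with rfl | hab
  · rfl
  obtain ⟨c, -, hc⟩ := exists_hasDerivAt_eq_slope f (fun _ => 0) hab hf hf'
  rw [eq_comm, div_eq_zero_iff, sub_eq_zero, sub_eq_zero] at hc
  exact hc.resolve_right hab.ne'

theorem hasDerivAt_kepler_energy {f v : ℝ → ℝ} {μ t : ℝ} (hf : HasDerivAt f (v t) t)
    (hv : HasDerivAt v (-μ / f t ^ 2) t) (hft : f t ≠ 0) :
    HasDerivAt (fun s => v s ^ 2 - 2 * μ / f s) 0 t := by
  refine ((hv.pow 2).sub ((hasDerivAt_const t (2 * μ)).div hf hft)).congr_deriv ?_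
  field_simp
  ring

theorem kepler_energy_eq {f v : ℝ → ℝ} {μ a b : ℝ} (hab : a ≤ b)
    (hf : ContinuousOn f (Icc a b)) (hv : ContinuousOn v (Icc a b))
    (hf₀ : ∀ t ∈ Icc a b, f t ≠ 0) (hf' : ∀ t ∈ Ioo a b, HasDerivAt f (v t) t)
    (hv' : ∀ t ∈ Ioo a b, HasDerivAt v (-μ / f t ^ 2) t) :
    v b ^ 2 - 2 * μ / f b = v a ^ 2 - 2 * μ / f a :=
  eq_of_hasDerivAt_eq_zero (f := fun t => v t ^ 2 - 2 * μ / f t) hab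
    ((hv.pow 2).sub (continuousOn_const.div hf hf₀)) fun t ht =>
      hasDerivAt_kepler_energy (hf' t ht) (hv' t ht) (hf₀ t (Ioo_subset_Icc_self ht))

theorem lt_of_kepler_energy_of_eventually_nonpos {v : ℝ → ℝ} {μ R r t : ℝ} (hμ : 0 < μ)
    (hR : 0 < R) (hr : 0 < r) (hv : ∀ᶠ s in nhds t, v s ≤ 0)
    (hv' : HasDerivAt v (-μ / r ^ 2) t) (henergy : v t ^ 2 = 2 * μ / r - 2 * μ / R) : r < R := by
  by_contra! hRr
  -- otherwise `v t = 0` would be a local maximum of `v`, contradicting `v' t < 0`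
  have hvt : v t = 0 := by
    have : 2 * μ / r ≤ 2 * μ / R := div_le_div_of_nonneg_left (by positivity) hR hRr
    exact pow_eq_zero_iff two_ne_zero |>.mp (le_antisymm (by linarith) (sq_nonneg _))
  have hmax : IsLocalMax v t := by
    filter_upwards [hv] with s hs
    exact hvt ▸ hs
  exact (div_neg_of_neg_of_pos (neg_neg_of_pos hμ) (by positivity)).ne
    (hmax.hasDerivAt_eq_zero hv')

theorem hasDerivAt_arcsin_sqrt_sub_sqrt {u : ℝ} (hu₀ : 0 < u) (hu₁ : u < 1) :
    HasDerivAt (fun u => arcsin √u - √(u * (1 - u))) (√u / √(1 - u)) u := by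
  have hs : √u ^ 2 = u := sq_sqrt hu₀.le
  have hs₀ : 0 < √u := sqrt_pos.mpr hu₀
  have hc₀ : 0 < √(1 - u) := sqrt_pos.mpr (by linarith)
  have harcsin := (hasDerivAt_arcsin (by linarith) (by nlinarith)).comp u
    (hasDerivAt_sqrt hu₀.ne')
  have hprod := ((hasDerivAt_id' u).fun_mul ((hasDerivAt_id' u).const_sub 1)).sqrt
    (mul_pos hu₀ (sub_pos.mpr hu₁)).ne'
  refine (harcsin.sub hprod).congr_deriv ?_
  rw [hs, sqrt_mul hu₀.le]
  field_simp
  linear_combination -2 * hs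

theorem rpow_three_halves_sq {R : ℝ} (hR : 0 ≤ R) : (R ^ ((3 : ℝ) / 2)) ^ 2 = R ^ 3 := by
  rw [← rpow_mul_natCast hR]
  norm_num

/-- With `μ = GM`, the time needed to fall from radius `x` to the centre in the collapse from rest
at radius `R`. -/
noncomputable def fallTime (μ R x : ℝ) : ℝ :=
  R ^ ((3 : ℝ) / 2) / √(2 * μ) * (arcsin √(x / R) - √(x / R * (1 - x / R)))

noncomputable def fallSpeed (μ R x : ℝ) : ℝ := √(2 * μ / x - 2 * μ / R)

theorem continuous_fallTime (μ R : ℝ) : Continuous (fallTime μ R) := by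
  unfold fallTime
  fun_prop

theorem fallTime_zero (μ R : ℝ) : fallTime μ R 0 = 0 := by
  simp [fallTime]

theorem fallTime_self {μ R : ℝ} (hR : R ≠ 0) :
    fallTime μ R R = π / 2 * R ^ ((3 : ℝ) / 2) / √(2 * μ) := by
  simp only [fallTime, div_self hR, sqrt_one, arcsin_one, sub_self, mul_zero, sqrt_zero, sub_zero]
  ring

theorem fallSpeed_pos {μ R x : ℝ} (hμ : 0 < μ) (hx : 0 < x) (hxR : x < R) :
    0 < fallSpeed μ R x :=
  sqrt_pos.mpr (sub_pos.mpr (div_lt_div_of_pos_left (by positivity) hx hxR))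

theorem hasDerivAt_fallTime {μ R x : ℝ} (hμ : 0 < μ) (hx : 0 < x) (hxR : x < R) :
    HasDerivAt (fallTime μ R) (fallSpeed μ R x)⁻¹ x := by
  have hR : 0 < R := hx.trans hxR
  have hu₁ : x / R < 1 := (div_lt_one hR).mpr hxR
  refine (((hasDerivAt_arcsin_sqrt_sub_sqrt (div_pos hx hR) hu₁).comp x
    ((hasDerivAt_id x).div_const R)).const_mul _).congr_deriv ?_
  have hv := fallSpeed_pos hμ hx hxR
  rw [← sq_eq_sq₀ (by positivity) (by positivity), inv_pow, fallSpeed,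
    sq_sqrt (sqrt_pos.mp hv).le]
  simp only [mul_pow, div_pow, rpow_three_halves_sq hR.le, sq_sqrt (div_pos hx hR).le,
    sq_sqrt (sub_pos.mpr hu₁).le, sq_sqrt (by positivity : 0 ≤ 2 * μ)]
  field_simp

theorem add_fallTime_eq {f v : ℝ → ℝ} {μ R a b : ℝ} (hμ : 0 < μ) (hab : a ≤ b)
    (hf : ContinuousOn f (Icc a b)) (hf' : ∀ t ∈ Ioo a b, HasDerivAt f (v t) t)
    (hfR : ∀ t ∈ Ioo a b, f t ∈ Ioo 0 R)
    (hv : ∀ t ∈ Ioo a b, v t = -fallSpeed μ R (f t)) :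
    b + fallTime μ R (f b) = a + fallTime μ R (f a) := by
  refine eq_of_hasDerivAt_eq_zero (f := fun t => t + fallTime μ R (f t)) hab
    (continuousOn_id.add ((continuous_fallTime μ R).comp_continuousOn hf)) fun t ht => ?_
  obtain ⟨hf₀, hfR⟩ := hfR t ht
  refine ((hasDerivAt_id t).add
    ((hasDerivAt_fallTime hμ hf₀ hfR).comp t (hf' t ht))).congr_deriv ?_
  rw [hv t ht, mul_neg, inv_mul_cancel₀ (fallSpeed_pos hμ hf₀ hfR).ne', add_neg_cancel]

theorem pi_div_two_mul_rpow_div_sqrt_eq_sqrt {G M R : ℝ} (hG : 0 < G) (hM : 0 < M)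
    (hR : 0 < R) :
    π / 2 * R ^ ((3 : ℝ) / 2) / √(2 * G * M) =
      √(3 * π / (32 * G * (3 * M / (4 * π * R ^ 3)))) := by
  rw [← sqrt_sq (by positivity : 0 ≤ π / 2 * R ^ ((3 : ℝ) / 2) / √(2 * G * M))]
  congr 1
  rw [div_pow, mul_pow, rpow_three_halves_sq hR.le, sq_sqrt (by positivity)]
  field_simp
  ring

/-- Free-fall (hydrodynamical) time of a pressureless collapsing sphere:
`T = (π/2)·R^{3/2}/√(2GM) = √(3π/(32Gρ₀))` with `ρ₀ = 3M/(4πR³)`. -/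
theorem stmt6 (G M R T : ℝ) (hG : 0 < G) (hM : 0 < M) (hR : 0 < R) (hT : 0 < T)
    (f v : ℝ → ℝ)
    (hf_cont : ContinuousOn f (Icc 0 T))
    (hf_deriv : ∀ t ∈ Ico (0 : ℝ) T, HasDerivWithinAt f (v t) (Ico 0 T) t)
    (hv_diff : ∀ t ∈ Ico (0 : ℝ) T, DifferentiableWithinAt ℝ v (Ico 0 T) t)
    (hv_deriv : ∀ t ∈ Ioo (0 : ℝ) T, HasDerivAt v (-(G * M) / (f t) ^ 2) t)
    (hf0 : f 0 = R) (hv0 : v 0 = 0)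
    (hf_pos : ∀ t ∈ Ico (0 : ℝ) T, 0 < f t)
    (hv_nonpos : ∀ t ∈ Ico (0 : ℝ) T, v t ≤ 0)
    (hfT : f T = 0) :
    T = (Real.pi / 2) * R ^ ((3 : ℝ) / 2) / Real.sqrt (2 * G * M) ∧
      T = Real.sqrt (3 * Real.pi / (32 * G * (3 * M / (4 * Real.pi * R ^ 3)))) := by
  have hμ : 0 < G * M := mul_pos hG hM
  have hnhds : ∀ t ∈ Ioo 0 T, Ico 0 T ∈ nhds t := fun t ht =>
    Filter.mem_of_superset (Ioo_mem_nhds ht.1 ht.2) Ioo_subset_Ico_self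
  have hf' : ∀ t ∈ Ioo 0 T, HasDerivAt f (v t) t := fun t ht =>
    (hf_deriv t (Ioo_subset_Ico_self ht)).hasDerivAt (hnhds t ht)
  have energy : ∀ t ∈ Ioo 0 T, v t ^ 2 = 2 * (G * M) / f t - 2 * (G * M) / R := by
    intro t ht
    have hsub : Icc 0 t ⊆ Ico 0 T := Icc_subset_Ico_right ht.2
    have h := kepler_energy_eq ht.1.le (hf_cont.mono (hsub.trans Ico_subset_Icc_self))
      (fun s hs => (hv_diff s (hsub hs)).continuousWithinAt.mono hsub)
      (fun s hs => (hf_pos s (hsub hs)).ne') (fun s hs => hf' s ⟨hs.1, hs.2.trans ht.2⟩)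
      (fun s hs => hv_deriv s ⟨hs.1, hs.2.trans ht.2⟩)
    rw [hv0, hf0] at h
    linarith
  have hf_lt : ∀ t ∈ Ioo 0 T, f t < R := fun t ht =>
    lt_of_kepler_energy_of_eventually_nonpos hμ hR (hf_pos t (Ioo_subset_Ico_self ht))
      (Filter.eventually_of_mem (hnhds t ht) hv_nonpos)
      (hv_deriv t ht) (energy t ht)
  have hv_eq : ∀ t ∈ Ioo 0 T, v t = -fallSpeed (G * M) R (f t) := by
    intro t ht
    rw [fallSpeed, ← energy t ht, sqrt_sq_eq_abs,
      abs_of_nonpos (hv_nonpos t (Ioo_subset_Ico_self ht)), neg_neg]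
  have hTime := add_fallTime_eq hμ hT.le hf_cont hf'
    (fun t ht => ⟨hf_pos t (Ioo_subset_Ico_self ht), hf_lt t ht⟩) hv_eq
  rw [hfT, fallTime_zero, add_zero, zero_add, hf0, fallTime_self hR.ne', ← mul_assoc] at hTime
  exact ⟨hTime, hTime.trans (pi_div_two_mul_rpow_div_sqrt_eq_sqrt hG hM hR)⟩
end

section
/- (Betti–Ritter formula.) Let γ ∈ (6/5, 2), K > 0, G > 0, R > 0. Let ρ : [0,R] → ℝ be continuous, continuously differentiable on (0,R), with ρ(r) > 0 for r ∈ [0,R) and ρ(R) = 0. Set p(r) = K·ρ(r)^γ, M(r) = ∫₀^r 4π s² ρ(s) ds and Mtot = M(R) > 0, and assume p'(r) = −G·M(r)·ρ(r)/r² on (0,R). Then the gravitational potential energy satisfies E_G := −∫₀^R G·M(r)·M'(r)/r dr = −(3(γ−1)/(5γ−6))·G·Mtot²/R, where M'(r) = 4π r² ρ(r). -/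
/-!
With pressure `p = Kρ^γ` and enthalpy `h = γ/(γ-1)·Kρ^(γ-1)` one has `h' = p'/ρ = -GM/r²` and
`hρ = γ/(γ-1)·p`, hence the three exact derivatives
  `(4πr³p)' = 3·4πr²p - GMM'/r`,
  `(hM)' = γ/(γ-1)·4πr²p - GM²/r²`,
  `(GM²/r)' = 2GMM'/r - GM²/r²`.
With the coefficients `γ/(5γ-6)`, `-3(γ-1)/(5γ-6)`, `3(γ-1)/(5γ-6)` the `p` and `M²/r²` terms
cancel, leaving a primitive of `GMM'/r`. It vanishes at `0`, since `M(0) = M'(0) = 0`, and equals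
`3(γ-1)/(5γ-6)·GM(R)²/R` at `R`, where `p = h = 0`.
-/

open Set intervalIntegral Real

theorem hasDerivWithinAt_integral_Icc {f : ℝ → ℝ} {a b x : ℝ} (hf : ContinuousOn f (Icc a b))
    (hx : x ∈ Icc a b) : HasDerivWithinAt (fun u => ∫ t in a..u, f t) (f x) (Icc a b) x := by
  have : Fact (x ∈ Icc a b) := ⟨hx⟩
  refine integral_hasDerivWithinAt_right ?_
    (hf.stronglyMeasurableAtFilter_nhdsWithin measurableSet_Icc x) (hf x hx)
  exact (hf.mono (uIcc_subset_Icc (left_mem_Icc.2 (hx.1.trans hx.2)) hx)).intervalIntegrable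

theorem continuousWithinAt_sq_div_self {f : ℝ → ℝ} {s : Set ℝ} (h0 : f 0 = 0)
    (hf : HasDerivWithinAt f 0 s 0) : ContinuousWithinAt (fun x => f x ^ 2 / x) s 0 := by
  have hslope := hasDerivWithinAt_iff_tendsto_slope.1 hf
  have key : (fun x => f x ^ 2 / x) = fun x => f x * slope f 0 x := by
    funext x
    simp only [slope_def_field, h0, sub_zero]
    ring
  rw [← continuousWithinAt_sdiff_self, key, ContinuousWithinAt, h0, zero_mul]
  simpa [h0] using (hf.continuousWithinAt.mono sdiff_subset).tendsto.mul hslope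

theorem continuousOn_sq_div_self {f f' : ℝ → ℝ} {b : ℝ}
    (hf : ∀ x ∈ Icc 0 b, HasDerivWithinAt f (f' x) (Icc 0 b) x) (h0 : f 0 = 0) (h'0 : f' 0 = 0) :
    ContinuousOn (fun x => f x ^ 2 / x) (Icc 0 b) := by
  intro x hx
  rcases hx.1.eq_or_lt with rfl | hx0
  · exact continuousWithinAt_sq_div_self h0 (by simpa [h'0] using hf 0 hx)
  · exact ((hf x hx).continuousWithinAt.pow 2).div continuousWithinAt_id hx0.ne'

theorem hasDerivAt_polytropic_enthalpy {ρ : ℝ → ℝ} {ρ' p' K γ r : ℝ} (hρ : HasDerivAt ρ ρ' r)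
    (hρr : 0 < ρ r) (hγ : γ ≠ 1) (hp : HasDerivAt (fun s => K * ρ s ^ γ) p' r) :
    HasDerivAt (fun s => γ / (γ - 1) * K * ρ s ^ (γ - 1)) (p' / ρ r) r := by
  have hp' : p' = K * (ρ' * γ * ρ r ^ (γ - 1)) :=
    hp.unique ((hρ.rpow_const (Or.inl hρr.ne')).const_mul K)
  refine ((hρ.rpow_const (p := γ - 1) (Or.inl hρr.ne')).const_mul
    (γ / (γ - 1) * K)).congr_deriv ?_
  have : γ - 1 ≠ 0 := sub_ne_zero.2 hγ
  rw [hp', rpow_sub_one hρr.ne' (γ - 1)]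
  field_simp

theorem polytropic_enthalpy_mul_self {x : ℝ} (hx : 0 < x) (K γ : ℝ) :
    γ / (γ - 1) * K * x ^ (γ - 1) * x = γ / (γ - 1) * (K * x ^ γ) := by
  rw [rpow_sub_one hx.ne']
  field_simp

theorem hasDerivAt_bettiRitter_primitive {M p h : ℝ → ℝ} {γ G ρ r : ℝ} (hr : r ≠ 0)
    (hγ : γ ≠ 1) (h5γ : 5 * γ - 6 ≠ 0)
    (hM : HasDerivAt M (4 * π * r ^ 2 * ρ) r) (hp : HasDerivAt p (-(G * M r * ρ) / r ^ 2) r)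
    (hh : HasDerivAt h (-(G * M r) / r ^ 2) r) (hhρ : h r * ρ = γ / (γ - 1) * p r) :
    HasDerivAt (fun s => 3 * (γ - 1) / (5 * γ - 6) * (G * (M s ^ 2 / s) - h s * M s)
        + γ / (5 * γ - 6) * (4 * π * s ^ 3 * p s)) (4 * π * G * (r * ρ * M r)) r := by
  have hGM2 := ((hM.pow 2).div (hasDerivAt_id r) hr).const_mul G
  have hhM := hh.mul hM
  have hvirial := ((hasDerivAt_pow 3 r).const_mul (4 * π)).mul hp
  refine (((hGM2.sub hhM).const_mul _).add (hvirial.const_mul _)).congr_deriv ?_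
  have hhρ' : (γ - 1) * (h r * ρ) = γ * p r := by
    rw [hhρ]; field_simp [sub_ne_zero.2 hγ]
  simp only [id, Pi.pow_apply, Nat.cast_ofNat]
  field_simp
  rw [div_eq_iff (by rwa [mul_comm] at h5γ)]
  linear_combination (-12 * π * r ^ 4) * hhρ'

theorem stmt8_general (γ K G R : ℝ) (hγ : γ ∈ Ioo (6 / 5 : ℝ) 2)
    (hR : 0 < R)
    (ρ ρ' : ℝ → ℝ)
    (hρ_cont : ContinuousOn ρ (Icc 0 R))
    (hρ_deriv : ∀ r ∈ Ioo (0 : ℝ) R, HasDerivAt ρ (ρ' r) r)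
    (hρ_pos : ∀ r ∈ Ico (0 : ℝ) R, 0 < ρ r) (hρR : ρ R = 0)
    (M : ℝ → ℝ)
    (hM : ∀ r, M r = ∫ s in (0 : ℝ)..r, 4 * Real.pi * s ^ 2 * ρ s)
    (hp_deriv : ∀ r ∈ Ioo (0 : ℝ) R,
      HasDerivAt (fun s => K * ρ s ^ γ) (-(G * M r * ρ r) / r ^ 2) r) :
    -(∫ r in (0 : ℝ)..R, G * M r * (4 * Real.pi * r ^ 2 * ρ r) / r)
      = -(3 * (γ - 1) / (5 * γ - 6)) * G * (M R) ^ 2 / R := by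
  obtain ⟨hγ_low, -⟩ := hγ
  have hγ_ne_one : γ ≠ 1 := by linarith
  have h5γ : 5 * γ - 6 ≠ 0 := by linarith
  have hM_deriv : ∀ r ∈ Icc 0 R, HasDerivWithinAt M (4 * π * r ^ 2 * ρ r) (Icc 0 R) r := by
    rw [show M = _ from funext hM]
    exact fun r => hasDerivWithinAt_integral_Icc (by fun_prop)
  have hM0 : M 0 = 0 := by simp [hM]
  set h := fun s => γ / (γ - 1) * K * ρ s ^ (γ - 1)
  set p := fun s => K * ρ s ^ γ
  set F := fun s => 3 * (γ - 1) / (5 * γ - 6) * (G * (M s ^ 2 / s) - h s * M s)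
    + γ / (5 * γ - 6) * (4 * π * s ^ 3 * p s)
  have hF_deriv : ∀ r ∈ Ioo 0 R, HasDerivAt F (4 * π * G * (r * ρ r * M r)) r := by
    intro r hr
    have hρr := hρ_pos r (Ioo_subset_Ico_self hr)
    have hh := hasDerivAt_polytropic_enthalpy (hρ_deriv r hr) hρr hγ_ne_one (hp_deriv r hr)
    have hM' := (hM_deriv r (Ioo_subset_Icc_self hr)).hasDerivAt (Icc_mem_nhds hr.1 hr.2)
    exact hasDerivAt_bettiRitter_primitive hr.1.ne' hγ_ne_one h5γ hM' (hp_deriv r hr)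
      (hh.congr_deriv (by field_simp)) (polytropic_enthalpy_mul_self hρr K γ)
  have hM_cont : ContinuousOn M (Icc 0 R) := fun r hr => (hM_deriv r hr).continuousWithinAt
  have hF_cont : ContinuousOn F (Icc 0 R) := by
    have := continuousOn_sq_div_self hM_deriv hM0 (by simp)
    have hρ_rpow (e : ℝ) (he : 0 ≤ e) : ContinuousOn (fun s => ρ s ^ e) (Icc 0 R) :=
      hρ_cont.rpow_const fun _ _ => Or.inr he
    have := hρ_rpow γ (by linarith)
    have := hρ_rpow (γ - 1) (by linarith)
    fun_prop
  have hF0 : F 0 = 0 := by simp [F, hM0]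
  have hFR : F R = 3 * (γ - 1) / (5 * γ - 6) * (G * (M R ^ 2 / R)) := by
    simp [F, h, p, hρR, zero_rpow (sub_ne_zero.2 hγ_ne_one), zero_rpow (by linarith : γ ≠ 0)]
  have hintegrand : (fun r => G * M r * (4 * π * r ^ 2 * ρ r) / r)
      = fun r => 4 * π * G * (r * ρ r * M r) := by
    funext r
    rcases eq_or_ne r 0 with rfl | hr
    · simp
    · field_simp
  rw [hintegrand, integral_eq_sub_of_hasDerivAt_of_le hR.le hF_cont hF_deriv
    (ContinuousOn.intervalIntegrable_of_Icc hR.le (by fun_prop)), hF0, hFR]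
  ring

/-- Betti–Ritter formula: for a polytropic star `p = K·ρ^γ`, `γ ∈ (6/5, 2)`, in
hydrostatic equilibrium, the gravitational energy is
`E_G = −∫₀^R G·M·M'/r dr = −(3(γ−1)/(5γ−6))·G·Mtot²/R`. -/
theorem stmt8 (γ K G R : ℝ) (hγ : γ ∈ Ioo (6 / 5 : ℝ) 2) (hK : 0 < K)
    (hG : 0 < G) (hR : 0 < R)
    (ρ ρ' : ℝ → ℝ)
    (hρ_cont : ContinuousOn ρ (Icc 0 R))
    (hρ_deriv : ∀ r ∈ Ioo (0 : ℝ) R, HasDerivAt ρ (ρ' r) r)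
    (hρ'_cont : ContinuousOn ρ' (Ioo 0 R))
    (hρ_pos : ∀ r ∈ Ico (0 : ℝ) R, 0 < ρ r) (hρR : ρ R = 0)
    (M : ℝ → ℝ)
    (hM : ∀ r, M r = ∫ s in (0 : ℝ)..r, 4 * Real.pi * s ^ 2 * ρ s)
    (hMtot : 0 < M R)
    (hp_deriv : ∀ r ∈ Ioo (0 : ℝ) R,
      HasDerivAt (fun s => K * ρ s ^ γ) (-(G * M r * ρ r) / r ^ 2) r) :
    -(∫ r in (0 : ℝ)..R, G * M r * (4 * Real.pi * r ^ 2 * ρ r) / r)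
      = -(3 * (γ - 1) / (5 * γ - 6)) * G * (M R) ^ 2 / R :=
  stmt8_general γ K G R hγ hR ρ ρ' hρ_cont hρ_deriv hρ_pos hρR M hM hp_deriv
end

section
/- Let Q > 0 and let f : ℝ → ℝ be continuous. Suppose θ : [0,Q] → ℝ is continuous on [0,Q], twice continuously differentiable on (0,Q], and satisfies (ξ²·θ'(ξ))' = ξ²·f(θ(ξ)) for all ξ ∈ (0,Q]. Then lim_{ξ→0⁺} θ'(ξ) = 0. -/
open Set Filter Topology

/-!
The flux `g ξ = ξ ^ 2 * θ' ξ` has derivative `ξ ^ 2 * f (θ ξ) = O(ξ ^ 2)`, so by the mean value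
theorem `|g b - g c| ≤ M * b ^ 3` for `0 < c < b`. Continuity of `θ` at the centre makes
`θ ξ - θ (ξ / 2) = θ' c * ξ / 2` small, so `c * θ' c`, and with it `g c`, is small at points `c`
arbitrarily close to `0`. Hence `|g b| ≤ M * b ^ 3`, that is `|θ' b| ≤ M * b`.
-/

theorem frequently_abs_mul_deriv_lt {θ θ' : ℝ → ℝ} (hθ : ContinuousWithinAt θ (Ioi 0) 0)
    (hderiv : ∀ᶠ x in 𝓝[>] 0, HasDerivAt θ (θ' x) x) {ε : ℝ} (hε : 0 < ε) :
    ∃ᶠ x in 𝓝[>] 0, |x * θ' x| < ε := by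
  have hhalf : Tendsto (fun x : ℝ => x / 2) (𝓝[>] 0) (𝓝[>] 0) :=
    tendsto_nhdsWithin_of_tendsto_nhds_of_eventually_within _
      ((continuous_id.div_const 2).tendsto' 0 0 (by simp) |>.mono_left nhdsWithin_le_nhds)
      (eventually_mem_nhdsWithin.mono fun x hx => mem_Ioi.2 (half_pos hx))
  have hdiff : Tendsto (fun x => |θ x - θ (x / 2)|) (𝓝[>] 0) (𝓝 0) := by
    simpa using (hθ.tendsto.sub (hθ.tendsto.comp hhalf)).abs
  rw [frequently_iff]
  intro U hU
  obtain ⟨b, hb, hbU⟩ := mem_nhdsGT_iff_exists_Ioo_subset.1 hU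
  obtain ⟨δ, hδ, hδderiv⟩ := mem_nhdsGT_iff_exists_Ioo_subset.1 hderiv
  obtain ⟨ξ, hξθ, hξ, hξbδ⟩ :=
    ((hdiff.eventually (gt_mem_nhds (half_pos hε))).and (Ioo_mem_nhdsGT (lt_min hb hδ))).exists
  have hξb : ξ < b := hξbδ.trans_le (min_le_left _ _)
  have hθderiv : ∀ x ∈ Ioc 0 ξ, HasDerivAt θ (θ' x) x :=
    fun x hx => hδderiv ⟨hx.1, hx.2.trans_lt (hξbδ.trans_le (min_le_right _ _))⟩
  obtain ⟨c, hc, hslope⟩ := exists_hasDerivAt_eq_slope θ θ' (half_lt_self hξ)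
    (fun x hx => (hθderiv x ⟨(half_pos hξ).trans_le hx.1, hx.2⟩).continuousAt.continuousWithinAt)
    (fun x hx => hθderiv x ⟨(half_pos hξ).trans hx.1, hx.2.le⟩)
  have hc0 : 0 < c := (half_pos hξ).trans hc.1
  refine ⟨c, hbU ⟨hc0, hc.2.trans hξb⟩, ?_⟩
  calc |c * θ' c| ≤ ξ * |θ' c| := by
        rw [abs_mul, abs_of_pos hc0]; gcongr; exact hc.2.le
    _ = 2 * |θ ξ - θ (ξ / 2)| := by
        rw [hslope, abs_div, abs_of_pos (by linarith : 0 < ξ - ξ / 2)]; field_simp; ring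
    _ < ε := by linarith [hξθ]

theorem abs_le_mul_pow_three_of_frequently_abs_lt {g g' : ℝ → ℝ} {Q M : ℝ}
    (hg : ∀ x ∈ Ioc 0 Q, HasDerivWithinAt g (g' x) (Ioc 0 Q) x)
    (hg' : ∀ x ∈ Ioc 0 Q, |g' x| ≤ M * x ^ 2)
    (hsmall : ∀ ε > 0, ∃ᶠ x in 𝓝[>] 0, |g x| < ε) {b : ℝ} (hb : b ∈ Ioc 0 Q) :
    |g b| ≤ M * b ^ 3 := by
  have hb2 : 0 < b ^ 2 := pow_pos hb.1 2
  have hM : 0 ≤ M := le_of_mul_le_mul_right (by linarith [abs_nonneg (g' b), hg' b hb]) hb2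
  refine le_of_forall_pos_lt_add fun ε hε => ?_
  obtain ⟨c, hgc, hc0, hcb⟩ := ((hsmall ε hε).and_eventually (Ioo_mem_nhdsGT hb.1)).exists
  have hsub : Icc c b ⊆ Ioc 0 Q := Icc_subset_Ioc hc0 hb.2
  have hmvt : |g b - g c| ≤ M * b ^ 2 * (b - c) :=
    norm_image_sub_le_of_norm_deriv_le_segment' (fun x hx => (hg x (hsub hx)).mono hsub)
      (fun x hx => (hg' x (hsub (Ico_subset_Icc_self hx))).trans
        (by gcongr; exacts [hc0.le.trans hx.1, hx.2.le]))
      b ⟨hcb.le, le_rfl⟩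
  calc |g b| ≤ |g b - g c| + |g c| := by linarith [abs_sub_abs_le_abs_sub (g b) (g c)]
    _ < M * b ^ 2 * (b - c) + ε := add_lt_add_of_le_of_lt hmvt hgc
    _ ≤ M * b ^ 3 + ε := by nlinarith [mul_nonneg hM hb2.le]

theorem stmt10_general (Q : ℝ) (hQ : 0 < Q) (f : ℝ → ℝ) (hf : Continuous f)
    (θ θ' : ℝ → ℝ)
    (hθ_cont : ContinuousOn θ (Icc 0 Q))
    (hθ_deriv : ∀ ξ ∈ Ioc (0 : ℝ) Q, HasDerivWithinAt θ (θ' ξ) (Ioc 0 Q) ξ)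
    (hode : ∀ ξ ∈ Ioc (0 : ℝ) Q,
      HasDerivWithinAt (fun s => s ^ 2 * θ' s) (ξ ^ 2 * f (θ ξ)) (Ioc 0 Q) ξ) :
    Filter.Tendsto θ' (nhdsWithin 0 (Ioi 0)) (nhds 0) := by
  obtain ⟨M, hM⟩ := isCompact_Icc.exists_bound_of_continuousOn (hf.comp_continuousOn hθ_cont)
  have hnear : ∀ᶠ x in 𝓝[>] 0, x ∈ Ioo 0 (min Q 1) := Ioo_mem_nhdsGT (lt_min hQ one_pos)
  have hθ_hasDerivAt : ∀ᶠ x in 𝓝[>] 0, HasDerivAt θ (θ' x) x := hnear.mono fun x hx =>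
    have hxQ : x < Q := hx.2.trans_le (min_le_left _ _)
    (hθ_deriv x ⟨hx.1, hxQ.le⟩).hasDerivAt (Ioc_mem_nhds hx.1 hxQ)
  have hθ_right : ContinuousWithinAt θ (Ioi 0) 0 :=
    (hθ_cont 0 ⟨le_rfl, hQ.le⟩).mono_of_mem_nhdsWithin (Icc_mem_nhdsGT hQ)
  have hflux_small : ∀ ε > 0, ∃ᶠ x in 𝓝[>] 0, |x ^ 2 * θ' x| < ε := fun ε hε =>
    ((frequently_abs_mul_deriv_lt hθ_right hθ_hasDerivAt hε).and_eventually hnear).mono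
      fun x ⟨hx, hx0, hx1⟩ => calc
        |x ^ 2 * θ' x| = x * |x * θ' x| := by
          rw [abs_mul, abs_mul, abs_of_nonneg (sq_nonneg x), abs_of_pos hx0]; ring
        _ ≤ |x * θ' x| := mul_le_of_le_one_left (abs_nonneg _) (hx1.le.trans (min_le_right _ _))
        _ < ε := hx
  have hbound : ∀ x ∈ Ioc 0 Q, |θ' x| ≤ M * x := fun x hx => by
    have hflux := abs_le_mul_pow_three_of_frequently_abs_lt hode (fun s hs => by
      rw [abs_mul, abs_of_nonneg (sq_nonneg s), mul_comm]
      exact mul_le_mul_of_nonneg_right (hM s ⟨hs.1.le, hs.2⟩) (sq_nonneg s)) hflux_small hx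
    rw [abs_mul, abs_of_nonneg (sq_nonneg x)] at hflux
    nlinarith [pow_pos hx.1 2]
  rw [tendsto_zero_iff_abs_tendsto_zero]
  refine squeeze_zero' (Eventually.of_forall fun _ => abs_nonneg _)
    (mem_of_superset (Ioc_mem_nhdsGT hQ) hbound) ?_
  exact ((continuous_const_mul M).tendsto' 0 0 (mul_zero M)).mono_left nhdsWithin_le_nhds

/-- A solution of the general Lane–Emden equation `(ξ²θ')' = ξ²·f(θ)` that is
continuous up to the centre must have `θ'(ξ) → 0` as `ξ → 0⁺`. -/
theorem stmt10 (Q : ℝ) (hQ : 0 < Q) (f : ℝ → ℝ) (hf : Continuous f)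
    (θ θ' : ℝ → ℝ)
    (hθ_cont : ContinuousOn θ (Icc 0 Q))
    (hθ_deriv : ∀ ξ ∈ Ioc (0 : ℝ) Q, HasDerivWithinAt θ (θ' ξ) (Ioc 0 Q) ξ)
    (hθ'_cont : ContinuousOn θ' (Ioc 0 Q))
    (hode : ∀ ξ ∈ Ioc (0 : ℝ) Q,
      HasDerivWithinAt (fun s => s ^ 2 * θ' s) (ξ ^ 2 * f (θ ξ)) (Ioc 0 Q) ξ) :
    Filter.Tendsto θ' (nhdsWithin 0 (Ioi 0)) (nhds 0) :=
  stmt10_general Q hQ f hf θ θ' hθ_cont hθ_deriv hode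
end

section
/- (Radiation TOV equation as the Euler–Lagrange equation of the entropy functional.) Let R > 0 and let M : (0,R) → ℝ be twice continuously differentiable with M'(r) > 0 and r − 2·M(r) > 0 for all r ∈ (0,R). Define the Lagrangian L(r, m, q) = q^{3/4}·r^{1/2}·(1 − 2m/r)^{−1/2} for q > 0 and 1 − 2m/r > 0, and suppose M satisfies the Euler–Lagrange equation d/dr [ (∂L/∂q)(r, M(r), M'(r)) ] − (∂L/∂m)(r, M(r), M'(r)) = 0 for all r ∈ (0,R). Set ρ(r) = M'(r)/(4π r²) and p(r) = ρ(r)/3. Then for all r ∈ (0,R), p'(r) = −( ρ(r) + p(r) )·( M(r) + 4π r³ p(r) )/( r·( r − 2·M(r) ) ). -/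
/-!
Write `P = ∂L/∂q = (3/4) q^{-1/4} r^{1/2} (1 - 2m/r)^{-1/2}` for the momentum. It is positive, and
`∂L/∂m = P · (4/3) q / (r - 2m)`, while along `q = M'` the derivative of `P` is `P` times the sum of
the logarithmic derivatives of its three factors. Cancelling `P`, the Euler–Lagrange equation becomes
the second order equation `M'' r (r - 2M) = 2 M' r - 8 M' M - (4/3) M'² r`, and substituting it into
the derivative of `p = M' / (12 π r²)` gives the TOV equation.
-/

open Set Filter Topology

theorem HasDerivAt.rpow_const_of_pos {f : ℝ → ℝ} {f' x : ℝ} (a : ℝ) (hf : HasDerivAt f f' x)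
    (hx : 0 < f x) : HasDerivAt (fun y => f y ^ a) (f x ^ a * (a * f' / f x)) x :=
  (hf.rpow_const (Or.inl hx.ne')).congr_deriv (by rw [Real.rpow_sub_one hx.ne']; ring)

namespace Radiation

noncomputable section

def entropyLagrangian (r m q : ℝ) : ℝ :=
  q ^ ((3 : ℝ) / 4) * r ^ ((1 : ℝ) / 2) * (1 - 2 * m / r) ^ (-(1 : ℝ) / 2)

def entropyMomentum (r m q : ℝ) : ℝ :=
  3 / 4 * q ^ (-(1 : ℝ) / 4) * r ^ ((1 : ℝ) / 2) * (1 - 2 * m / r) ^ (-(1 : ℝ) / 2)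

def entropyForce (r m q : ℝ) : ℝ :=
  q ^ ((3 : ℝ) / 4) * r ^ ((1 : ℝ) / 2) * (1 - 2 * m / r) ^ (-(3 : ℝ) / 2) / r

end

theorem one_sub_two_mul_div_pos {r m : ℝ} (hr : 0 < r) (hm : 0 < r - 2 * m) :
    0 < 1 - 2 * m / r := by
  rw [one_sub_div hr.ne']; positivity

theorem entropyMomentum_pos {r m q : ℝ} (hr : 0 < r) (hq : 0 < q) (hm : 0 < r - 2 * m) :
    0 < entropyMomentum r m q := by
  have := one_sub_two_mul_div_pos hr hm
  unfold entropyMomentum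
  positivity

theorem hasDerivAt_entropyLagrangian_q {r m q : ℝ} (hq : q ≠ 0) :
    HasDerivAt (entropyLagrangian r m) (entropyMomentum r m q) q :=
  ((Real.hasDerivAt_rpow_const (p := (3 : ℝ) / 4) (Or.inl hq)).mul_const _).mul_const _
    |>.congr_deriv (by unfold entropyMomentum; norm_num)

theorem hasDerivAt_entropyLagrangian_m {r m q : ℝ} (hw : 1 - 2 * m / r ≠ 0) :
    HasDerivAt (fun m => entropyLagrangian r m q) (entropyForce r m q) m := by
  have hw' : HasDerivAt (fun m => 1 - 2 * m / r) (-(2 / r)) m := by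
    simpa using (((hasDerivAt_id m).const_mul 2).div_const r).const_sub 1
  refine ((hw'.rpow_const (p := -(1 : ℝ) / 2) (Or.inl hw)).const_mul
    (q ^ ((3 : ℝ) / 4) * r ^ ((1 : ℝ) / 2))).congr_deriv ?_
  unfold entropyForce
  norm_num
  ring

theorem entropyForce_eq_entropyMomentum_mul {r m q : ℝ} (hr : 0 < r) (hq : q ≠ 0)
    (hm : 0 < r - 2 * m) :
    entropyForce r m q = entropyMomentum r m q * (4 / 3 * q / (r - 2 * m)) := by
  have hq' : q ^ ((3 : ℝ) / 4) = q ^ (-(1 : ℝ) / 4) * q := by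
    rw [← Real.rpow_add_one hq]; norm_num
  have hw : (1 - 2 * m / r) ^ (-(3 : ℝ) / 2)
      = (1 - 2 * m / r) ^ (-(1 : ℝ) / 2) / (1 - 2 * m / r) := by
    rw [← Real.rpow_sub_one (one_sub_two_mul_div_pos hr hm).ne']; norm_num
  unfold entropyForce entropyMomentum
  rw [hq', hw, one_sub_div hr.ne']
  field_simp

theorem hasDerivAt_entropyMomentum_comp {M M' : ℝ → ℝ} {r M'' : ℝ} (hr : 0 < r)
    (hM : HasDerivAt M (M' r) r) (hM' : HasDerivAt M' M'' r) (hpos : 0 < M' r)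
    (hhor : 0 < r - 2 * M r) :
    HasDerivAt (fun s => entropyMomentum s (M s) (M' s))
      (entropyMomentum r (M r) (M' r) *
        (-(1 / 4) * M'' / M' r + 1 / (2 * r) + (M' r * r - M r) / (r * (r - 2 * M r)))) r := by
  have hw : 0 < 1 - 2 * M r / r := one_sub_two_mul_div_pos hr hhor
  have hw' : HasDerivAt (fun s => 1 - 2 * M s / s) (-((2 * M' r * r - 2 * M r) / r ^ 2)) r := by
    simpa using ((hM.const_mul 2).div (hasDerivAt_id r) hr.ne').const_sub 1
  have h := (((hM'.rpow_const_of_pos (-(1 : ℝ) / 4) hpos).const_mul (3 / 4)).mul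
    ((hasDerivAt_id r).rpow_const_of_pos ((1 : ℝ) / 2) hr)).mul
    (hw'.rpow_const_of_pos (-(1 : ℝ) / 2) hw)
  refine h.congr_deriv ?_
  unfold entropyMomentum
  simp only [id, Pi.mul_apply]
  rw [one_sub_div hr.ne']
  field_simp

theorem mass_ode_of_eulerLagrange {M M' : ℝ → ℝ} {r M'' : ℝ} (hr : 0 < r)
    (hM : HasDerivAt M (M' r) r) (hM' : HasDerivAt M' M'' r) (hpos : ∀ᶠ s in 𝓝 r, 0 < M' s)
    (hhor : 0 < r - 2 * M r)
    (hEL : HasDerivAt (fun s => deriv (fun q => entropyLagrangian s (M s) q) (M' s))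
      (deriv (fun m => entropyLagrangian r m (M' r)) (M r)) r) :
    M'' * r * (r - 2 * M r) = 2 * M' r * r - 8 * M' r * M r - 4 / 3 * M' r ^ 2 * r := by
  have hq : 0 < M' r := hpos.self_of_nhds
  have hw : 1 - 2 * M r / r ≠ 0 := (one_sub_two_mul_div_pos hr hhor).ne'
  rw [(hasDerivAt_entropyLagrangian_m hw).deriv,
    entropyForce_eq_entropyMomentum_mul hr hq.ne' hhor] at hEL
  have hmom : (fun s => entropyMomentum s (M s) (M' s)) =ᶠ[𝓝 r]
      fun s => deriv (fun q => entropyLagrangian s (M s) q) (M' s) := by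
    filter_upwards [hpos] with s hs
    exact (hasDerivAt_entropyLagrangian_q hs.ne').deriv.symm
  have h := mul_left_cancel₀ (entropyMomentum_pos hr hq hhor).ne'
    (((hasDerivAt_entropyMomentum_comp hr hM hM' hq hhor).congr_of_eventuallyEq hmom.symm).unique
      hEL)
  field_simp at h
  linear_combination (-1 / 6) * h

theorem hasDerivAt_pressure_of_mass_ode {u : ℝ → ℝ} {r m u' : ℝ} (hr : 0 < r)
    (hm : 0 < r - 2 * m) (hu : HasDerivAt u u' r)
    (hode : u' * r * (r - 2 * m) = 2 * u r * r - 8 * u r * m - 4 / 3 * u r ^ 2 * r) :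
    HasDerivAt (fun s => (u s / (4 * Real.pi * s ^ 2)) / 3)
      (-((u r / (4 * Real.pi * r ^ 2)) + (u r / (4 * Real.pi * r ^ 2)) / 3)
          * (m + 4 * Real.pi * r ^ 3 * ((u r / (4 * Real.pi * r ^ 2)) / 3))
          / (r * (r - 2 * m))) r := by
  have hden : HasDerivAt (fun s : ℝ => 4 * Real.pi * s ^ 2) (4 * Real.pi * (2 * r)) r := by
    simpa using (hasDerivAt_pow 2 r).const_mul (4 * Real.pi)
  refine ((hu.div hden (by positivity)).div_const 3).congr_deriv ?_
  have hu' : u' = (2 * u r * r - 8 * u r * m - 4 / 3 * u r ^ 2 * r) / (r * (r - 2 * m)) := by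
    rw [eq_div_iff (by positivity)]
    linear_combination hode
  rw [hu']
  field_simp
  ring

end Radiation

theorem stmt17_general (R : ℝ)
    (M M' M'' : ℝ → ℝ)
    (hM_deriv : ∀ r ∈ Ioo (0 : ℝ) R, HasDerivAt M (M' r) r)
    (hM'_deriv : ∀ r ∈ Ioo (0 : ℝ) R, HasDerivAt M' (M'' r) r)
    (hM'_pos : ∀ r ∈ Ioo (0 : ℝ) R, 0 < M' r)
    (hhorizon : ∀ r ∈ Ioo (0 : ℝ) R, 0 < r - 2 * M r)
    (L : ℝ → ℝ → ℝ → ℝ)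
    (hL : ∀ r m q, L r m q
      = q ^ ((3 : ℝ) / 4) * r ^ ((1 : ℝ) / 2) * (1 - 2 * m / r) ^ (-(1 : ℝ) / 2))
    (hEL : ∀ r ∈ Ioo (0 : ℝ) R,
      HasDerivAt (fun s => deriv (fun q => L s (M s) q) (M' s))
        (deriv (fun m => L r m (M' r)) (M r)) r) :
    ∀ r ∈ Ioo (0 : ℝ) R,
      HasDerivAt (fun s => (M' s / (4 * Real.pi * s ^ 2)) / 3)
        (-((M' r / (4 * Real.pi * r ^ 2)) + (M' r / (4 * Real.pi * r ^ 2)) / 3)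
            * (M r + 4 * Real.pi * r ^ 3 * ((M' r / (4 * Real.pi * r ^ 2)) / 3))
            / (r * (r - 2 * M r))) r := by
  obtain rfl : L = Radiation.entropyLagrangian := funext₃ hL
  intro r hr
  have hpos : ∀ᶠ s in 𝓝 r, 0 < M' s :=
    eventually_of_mem (isOpen_Ioo.mem_nhds hr) hM'_pos
  exact Radiation.hasDerivAt_pressure_of_mass_ode hr.1 (hhorizon r hr) (hM'_deriv r hr)
    (Radiation.mass_ode_of_eulerLagrange hr.1 (hM_deriv r hr) (hM'_deriv r hr) hpos
      (hhorizon r hr) (hEL r hr))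

/-- The Euler–Lagrange equation of the entropy Lagrangian
`L(r,m,q) = q^{3/4}·r^{1/2}·(1 − 2m/r)^{−1/2}` for self-gravitating radiation implies
the radiation Tolman–Oppenheimer–Volkoff equation
`p' = −(ρ + p)(M + 4πr³p)/(r(r − 2M))` with `ρ(r) = M'(r)/(4πr²)` and `p = ρ/3`. -/
theorem stmt17 (R : ℝ) (hR : 0 < R)
    (M M' M'' : ℝ → ℝ)
    (hM_deriv : ∀ r ∈ Ioo (0 : ℝ) R, HasDerivAt M (M' r) r)
    (hM'_cont : ContinuousOn M' (Ioo 0 R))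
    (hM'_deriv : ∀ r ∈ Ioo (0 : ℝ) R, HasDerivAt M' (M'' r) r)
    (hM''_cont : ContinuousOn M'' (Ioo 0 R))
    (hM'_pos : ∀ r ∈ Ioo (0 : ℝ) R, 0 < M' r)
    (hhorizon : ∀ r ∈ Ioo (0 : ℝ) R, 0 < r - 2 * M r)
    (L : ℝ → ℝ → ℝ → ℝ)
    (hL : ∀ r m q, L r m q
      = q ^ ((3 : ℝ) / 4) * r ^ ((1 : ℝ) / 2) * (1 - 2 * m / r) ^ (-(1 : ℝ) / 2))
    (hEL : ∀ r ∈ Ioo (0 : ℝ) R,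
      HasDerivAt (fun s => deriv (fun q => L s (M s) q) (M' s))
        (deriv (fun m => L r m (M' r)) (M r)) r) :
    ∀ r ∈ Ioo (0 : ℝ) R,
      HasDerivAt (fun s => (M' s / (4 * Real.pi * s ^ 2)) / 3)
        (-((M' r / (4 * Real.pi * r ^ 2)) + (M' r / (4 * Real.pi * r ^ 2)) / 3)
            * (M r + 4 * Real.pi * r ^ 3 * ((M' r / (4 * Real.pi * r ^ 2)) / 3))
            / (r * (r - 2 * M r))) r :=
  stmt17_general R M M' M'' hM_deriv hM'_deriv hM'_pos hhorizon L hL hEL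
end

section
/- (Interior Schwarzschild pressure profile.) Let G, ρ, R > 0, set M(r) = (4/3)·π·r³·ρ and Mtot = (4/3)·π·R³·ρ, and assume G·Mtot/R < 4/9. Define p : [0,R] → ℝ by p(r) = ρ·( √(1 − 2·G·Mtot·r²/R³) − √(1 − 2·G·Mtot/R) ) / ( 3·√(1 − 2·G·Mtot/R) − √(1 − 2·G·Mtot·r²/R³) ). Then the denominator is strictly positive on [0,R], p is nonnegative with p(R) = 0, and p satisfies the Tolman–Oppenheimer–Volkoff equation p'(r) = −G·( ρ + p(r) )·( M(r) + 4π r³ p(r) )/( r·( r − 2·G·M(r) ) ) for all r ∈ (0,R). -/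
/-!
Write `a = 8πGρ/3`, so that `2·G·M(r) = a·r³` and the profile is `p = ρ(y - c)/(3c - y)` with
`y(r) = √(1 - a r²)` and `c = y(R)`. The bound `G·Mtot/R < 4/9` says `c > 1/3`, hence `3c > 1 ≥ y`.
Since `dp/dy = 2ρc/(3c - y)²` and `dy/dr = -a r / y`, while `ρ + p = 2ρc/(3c - y)`,
`M + 4πr³p = (4/3)πr³ρ · 2y/(3c - y)` and `r - 2GM = r y²`, both sides of the TOV equation
equal `-2ρcar / (y (3c - y)²)`.
-/

open Set

noncomputable def interiorPressure (ρ a R r : ℝ) : ℝ :=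
  ρ * (√(1 - a * r ^ 2) - √(1 - a * R ^ 2)) / (3 * √(1 - a * R ^ 2) - √(1 - a * r ^ 2))

lemma one_third_lt_sqrt_one_sub {x : ℝ} (hx : x < 8 / 9) : 1 / 3 < √(1 - x) :=
  Real.lt_sqrt_of_sq_lt (by linarith)

section Profile

variable {ρ a R : ℝ}

lemma interiorPressure_denom_pos (ha : 0 ≤ a) (haR : a * R ^ 2 < 8 / 9) (r : ℝ) :
    0 < 3 * √(1 - a * R ^ 2) - √(1 - a * r ^ 2) := by
  have hy : √(1 - a * r ^ 2) ≤ 1 := Real.sqrt_le_one.mpr (by nlinarith [sq_nonneg r])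
  linarith [one_third_lt_sqrt_one_sub haR]

lemma interiorPressure_nonneg (hρ : 0 ≤ ρ) (ha : 0 ≤ a) (haR : a * R ^ 2 < 8 / 9) {r : ℝ}
    (hr : r ^ 2 ≤ R ^ 2) : 0 ≤ interiorPressure ρ a R r := by
  have hc : √(1 - a * R ^ 2) ≤ √(1 - a * r ^ 2) :=
    Real.sqrt_le_sqrt (by nlinarith)
  exact div_nonneg (mul_nonneg hρ (by linarith)) (interiorPressure_denom_pos ha haR r).le

@[simp]
lemma interiorPressure_self (ρ a R : ℝ) : interiorPressure ρ a R R = 0 := by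
  simp [interiorPressure]

lemma hasDerivAt_sqrt_one_sub_mul_sq {r : ℝ} (hr : 0 < 1 - a * r ^ 2) :
    HasDerivAt (fun x ↦ √(1 - a * x ^ 2)) (-(a * r) / √(1 - a * r ^ 2)) r := by
  have h := (((hasDerivAt_pow 2 r).const_mul a).const_sub 1).sqrt hr.ne'
  convert h using 1
  field_simp
  ring

lemma hasDerivAt_interiorPressure {r : ℝ} (hr : 0 < 1 - a * r ^ 2)
    (hD : 3 * √(1 - a * R ^ 2) - √(1 - a * r ^ 2) ≠ 0) :
    HasDerivAt (interiorPressure ρ a R)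
      (-(2 * ρ * √(1 - a * R ^ 2) * a * r) /
        (√(1 - a * r ^ 2) * (3 * √(1 - a * R ^ 2) - √(1 - a * r ^ 2)) ^ 2)) r := by
  have hy := hasDerivAt_sqrt_one_sub_mul_sq hr
  have hq : HasDerivAt (interiorPressure ρ a R) _ r :=
    ((hy.sub_const _).const_mul ρ).div (hy.const_sub _) hD
  have hy0 : √(1 - a * r ^ 2) ≠ 0 := (Real.sqrt_pos.mpr hr).ne'
  refine hq.congr_deriv ?_
  generalize √(1 - a * r ^ 2) = y at hD hy0 ⊢
  generalize √(1 - a * R ^ 2) = c at hD ⊢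
  field_simp
  ring

end Profile

lemma tov_rhs_eq {G ρ a c r y : ℝ} (ha : a = 8 / 3 * Real.pi * G * ρ) (hy : y ^ 2 = 1 - a * r ^ 2)
    (hr : r ≠ 0) (hy0 : y ≠ 0) (hD : 3 * c - y ≠ 0) :
    -(G * (ρ + ρ * (y - c) / (3 * c - y)) *
        (4 / 3 * Real.pi * r ^ 3 * ρ + 4 * Real.pi * r ^ 3 * (ρ * (y - c) / (3 * c - y)))) /
        (r * (r - 2 * G * (4 / 3 * Real.pi * r ^ 3 * ρ)))
      = -(2 * ρ * c * a * r) / (y * (3 * c - y) ^ 2) := by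
  have hdenom : r - 2 * G * (4 / 3 * Real.pi * r ^ 3 * ρ) = r * y ^ 2 := by rw [hy, ha]; ring
  have hsum : ρ + ρ * (y - c) / (3 * c - y) = 2 * ρ * c / (3 * c - y) := by
    rw [eq_div_iff hD, add_mul, div_mul_cancel₀ _ hD]; ring
  have hmass : 4 / 3 * Real.pi * r ^ 3 * ρ + 4 * Real.pi * r ^ 3 * (ρ * (y - c) / (3 * c - y))
      = 4 / 3 * Real.pi * r ^ 3 * ρ * (2 * y / (3 * c - y)) := by
    field_simp; ring
  rw [hsum, hmass, hdenom, ha]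
  field_simp
  ring

/-- Interior Schwarzschild pressure profile: for a constant-density relativistic star
with `G·Mtot/R < 4/9`, the explicit profile `p` has positive denominator, is
nonnegative, vanishes at the surface, and satisfies the TOV equation. -/
theorem stmt18 (G ρ R : ℝ) (hG : 0 < G) (hρ : 0 < ρ) (hR : 0 < R)
    (M : ℝ → ℝ) (hM : ∀ r, M r = (4 / 3) * Real.pi * r ^ 3 * ρ)
    (hbound : G * M R / R < 4 / 9)
    (p : ℝ → ℝ)
    (hp : ∀ r, p r
      = ρ * (Real.sqrt (1 - 2 * G * M R * r ^ 2 / R ^ 3)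
              - Real.sqrt (1 - 2 * G * M R / R))
          / (3 * Real.sqrt (1 - 2 * G * M R / R)
              - Real.sqrt (1 - 2 * G * M R * r ^ 2 / R ^ 3))) :
    (∀ r ∈ Icc (0 : ℝ) R,
        0 < 3 * Real.sqrt (1 - 2 * G * M R / R)
              - Real.sqrt (1 - 2 * G * M R * r ^ 2 / R ^ 3)) ∧
    (∀ r ∈ Icc (0 : ℝ) R, 0 ≤ p r) ∧
    p R = 0 ∧
    (∀ r ∈ Ioo (0 : ℝ) R,
      HasDerivAt p
        (-(G * (ρ + p r) * (M r + 4 * Real.pi * r ^ 3 * p r))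
          / (r * (r - 2 * G * M r))) r) := by
  set a := 8 / 3 * Real.pi * G * ρ with ha
  have ha0 : 0 ≤ a := by positivity
  have hMR : 2 * G * M R = a * R ^ 3 := by rw [hM]; ring
  have hsurf : 1 - 2 * G * M R / R = 1 - a * R ^ 2 := by rw [hMR]; field_simp
  have hin (r : ℝ) : 1 - 2 * G * M R * r ^ 2 / R ^ 3 = 1 - a * r ^ 2 := by rw [hMR]; field_simp
  have haR : a * R ^ 2 < 8 / 9 := by
    have : a * R ^ 2 = 2 * (G * M R / R) := by
      rw [show 2 * (G * M R / R) = 2 * G * M R / R by ring, hMR]; field_simp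
    linarith
  have hp' : p = interiorPressure ρ a R := by
    ext r; rw [hp, hsurf, hin]; rfl
  have hsq {r : ℝ} (hr : r ∈ Icc 0 R) : r ^ 2 ≤ R ^ 2 := pow_le_pow_left₀ hr.1 hr.2 2
  refine ⟨fun r _ ↦ ?_, fun r hr ↦ ?_, by simp [hp'], fun r hr ↦ ?_⟩
  · rw [hsurf, hin]; exact interiorPressure_denom_pos ha0 haR r
  · rw [hp']; exact interiorPressure_nonneg hρ.le ha0 haR (hsq hr)
  · have hr2 : 0 < 1 - a * r ^ 2 := by nlinarith [hsq (Ioo_subset_Icc_self hr)]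
    have hD := interiorPressure_denom_pos (R := R) ha0 haR r
    rw [hp', hM]
    refine (hasDerivAt_interiorPressure hr2 hD.ne').congr_deriv ?_
    exact (tov_rhs_eq ha (Real.sq_sqrt hr2.le) hr.1.ne' (Real.sqrt_pos.mpr hr2).ne' hD.ne').symm
end

section
/- (Buchdahl bound.) Let G, ρ, R > 0, set M(r) = (4/3)·π·r³·ρ and Mtot = (4/3)·π·R³·ρ, and assume 2·G·Mtot/R < 1. Suppose p : [0,R] → ℝ is continuous, nonnegative, differentiable on (0,R), satisfies p(R) = 0, and satisfies the Tolman–Oppenheimer–Volkoff equation p'(r) = −G·( ρ + p(r) )·( M(r) + 4π r³ p(r) )/( r·( r − 2·G·M(r) ) ) for all r ∈ (0,R). Then G·Mtot/R < 4/9. -/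
/-!
For constant density the TOV equation has the first integral
`Q(r) = (ρ + p)² (1 - k r²) / (ρ + 3p)²`, where `1 - k r² = 1 - 2 G M(r) / r`.
At the surface `p(R) = 0` gives `Q(R) = 1 - k R²`, while at the centre `p(0) ≥ 0` and `ρ > 0`
give `(ρ + p(0)) / (ρ + 3 p(0)) > 1/3`, so `Q(0) > 1/9`. Hence `k R² < 8/9`,
i.e. `G Mtot / R < 4/9`.
-/

open Set

noncomputable def buchdahlInvariant (ρ k : ℝ) (p : ℝ → ℝ) (r : ℝ) : ℝ :=
  (ρ + p r) ^ 2 * (1 - k * r ^ 2) / (ρ + 3 * p r) ^ 2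

lemma tov_rhs_const_density (G ρ r q : ℝ) (hr : r ≠ 0) (hρ : ρ ≠ 0)
    (hsch : 1 - 8 / 3 * Real.pi * G * ρ * r ^ 2 ≠ 0) :
    -(G * (ρ + q) * (4 / 3 * Real.pi * r ^ 3 * ρ + 4 * Real.pi * r ^ 3 * q))
        / (r * (r - 2 * G * (4 / 3 * Real.pi * r ^ 3 * ρ)))
      = -(8 / 3 * Real.pi * G * ρ * r * (ρ + q) * (ρ + 3 * q))
        / (2 * ρ * (1 - 8 / 3 * Real.pi * G * ρ * r ^ 2)) := by
  have hden : r * (r - 2 * G * (4 / 3 * Real.pi * r ^ 3 * ρ))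
      = r ^ 2 * (1 - 8 / 3 * Real.pi * G * ρ * r ^ 2) := by ring
  rw [hden, div_eq_div_iff (by positivity) (by positivity)]
  ring

lemma hasDerivAt_buchdahlInvariant {ρ k r : ℝ} {p : ℝ → ℝ} (hρ : ρ ≠ 0)
    (hsch : 1 - k * r ^ 2 ≠ 0) (hden : ρ + 3 * p r ≠ 0)
    (hp : HasDerivAt p (-(k * r * (ρ + p r) * (ρ + 3 * p r)) / (2 * ρ * (1 - k * r ^ 2))) r) :
    HasDerivAt (buchdahlInvariant ρ k p) 0 r := by
  set p' := -(k * r * (ρ + p r) * (ρ + 3 * p r)) / (2 * ρ * (1 - k * r ^ 2)) with hp'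
  have hnum : HasDerivAt (fun r => (ρ + p r) ^ 2 * (1 - k * r ^ 2))
      (2 * (ρ + p r) ^ 1 * (0 + p') * (1 - k * r ^ 2) + (ρ + p r) ^ 2 * (0 - k * (2 * r ^ 1))) r :=
    (((hasDerivAt_const r ρ).add hp).pow 2).mul
      ((hasDerivAt_const r 1).sub ((hasDerivAt_pow 2 r).const_mul k))
  have hdenom : HasDerivAt (fun r => (ρ + 3 * p r) ^ 2) (2 * (ρ + 3 * p r) ^ 1 * (0 + 3 * p')) r :=
    ((hasDerivAt_const r ρ).add (hp.const_mul 3)).pow 2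
  refine (hnum.div hdenom (pow_ne_zero 2 hden)).congr_deriv ?_
  rw [hp']
  field_simp
  ring

lemma continuousOn_buchdahlInvariant {ρ k : ℝ} {p : ℝ → ℝ} {s : Set ℝ}
    (hp : ContinuousOn p s) (hden : ∀ r ∈ s, ρ + 3 * p r ≠ 0) :
    ContinuousOn (buchdahlInvariant ρ k p) s :=
  (((continuousOn_const.add hp).pow 2).mul (continuousOn_const.sub
    (continuousOn_const.mul (continuousOn_pow 2)))).div
    ((continuousOn_const.add (continuousOn_const.mul hp)).pow 2)
    fun r hr => pow_ne_zero 2 (hden r hr)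

lemma one_ninth_lt_buchdahlInvariant_zero {ρ k : ℝ} {p : ℝ → ℝ} (hρ : 0 < ρ) (hp : 0 ≤ p 0) :
    1 / 9 < buchdahlInvariant ρ k p 0 := by
  rw [buchdahlInvariant, div_lt_div_iff₀ (by norm_num) (by positivity)]
  nlinarith

lemma buchdahlInvariant_eq_of_eq_zero {ρ k R : ℝ} {p : ℝ → ℝ} (hρ : ρ ≠ 0) (hpR : p R = 0) :
    buchdahlInvariant ρ k p R = 1 - k * R ^ 2 := by
  rw [buchdahlInvariant, hpR, mul_zero, add_zero, mul_div_cancel_left₀ _ (pow_ne_zero 2 hρ)]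

/-- Buchdahl bound: a constant-density relativistic star with continuous nonnegative
pressure satisfying the Tolman–Oppenheimer–Volkoff equation and `p R = 0` must have
`G·Mtot/R < 4/9`. -/
theorem stmt19 (G ρ R : ℝ) (hG : 0 < G) (hρ : 0 < ρ) (hR : 0 < R)
    (M : ℝ → ℝ) (hM : ∀ r, M r = (4 / 3) * Real.pi * r ^ 3 * ρ)
    (hhorizon : 2 * G * M R / R < 1)
    (p : ℝ → ℝ) (hp_cont : ContinuousOn p (Icc 0 R))
    (hp_nonneg : ∀ r ∈ Icc (0 : ℝ) R, 0 ≤ p r)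
    (hp_deriv : ∀ r ∈ Ioo (0 : ℝ) R,
      HasDerivAt p
        (-(G * (ρ + p r) * (M r + 4 * Real.pi * r ^ 3 * p r))
          / (r * (r - 2 * G * M r))) r)
    (hpR : p R = 0) :
    G * M R / R < 4 / 9 := by
  set k := 8 / 3 * Real.pi * G * ρ
  have hcompact : G * M R / R = k * R ^ 2 / 2 := by
    rw [hM]
    field_simp
    ring
  have hkR : k * R ^ 2 < 1 := by
    rw [mul_assoc, mul_div_assoc, hcompact] at hhorizon
    linarith
  have hsch : ∀ r ∈ Icc 0 R, 0 < 1 - k * r ^ 2 := fun r ⟨hr0, hrR⟩ => by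
    have : k * r ^ 2 ≤ k * R ^ 2 := by gcongr
    linarith
  have hden : ∀ r ∈ Icc 0 R, 0 < ρ + 3 * p r := fun r hr => by
    linarith [hp_nonneg r hr]
  have hQ' : ∀ r ∈ Ioo 0 R, HasDerivAt (buchdahlInvariant ρ k p) 0 r := fun r hr =>
    have hr' := Ioo_subset_Icc_self hr
    hasDerivAt_buchdahlInvariant hρ.ne' (hsch r hr').ne' (hden r hr').ne' <| by
      simpa only [hM, tov_rhs_const_density G ρ r (p r) hr.1.ne' hρ.ne' (hsch r hr').ne']
        using hp_deriv r hr
  obtain ⟨c, -, hc⟩ := exists_hasDerivAt_eq_slope _ (fun _ => 0) hR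
    (continuousOn_buchdahlInvariant hp_cont fun r hr => (hden r hr).ne') hQ'
  have hQ : buchdahlInvariant ρ k p R = buchdahlInvariant ρ k p 0 := by
    rw [sub_zero, eq_comm, div_eq_zero_iff, sub_eq_zero] at hc
    exact hc.resolve_right hR.ne'
  have hcentre := one_ninth_lt_buchdahlInvariant_zero (k := k) hρ (hp_nonneg 0 ⟨le_rfl, hR.le⟩)
  rw [← hQ, buchdahlInvariant_eq_of_eq_zero hρ.ne' hpR] at hcentre
  rw [hcompact]
  linarith
end
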